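/- arXiv:2405.14447 — 5 statements merged into one kernel-verified Lean document; each statement's English description precedes it below -/
import Mathlib

section
/- Let T be an ergodic measure-preserving ℤ³-action on a probability space (Ω,A,μ). Let I̅₁ be the σ-algebra of sets invariant under the ℤ²-action (T_{0,j,k}), I̅₂ the σ-algebra of sets invariant under (T_{i,0,k}), and I̅₃ the σ-algebra of sets invariant under (T_{i,j,0}). Then the σ-algebras I̅₁, I̅₂ and I̅₃ are independent: for all A₁∈I̅₁, A₂∈I̅₂, A₃∈I̅₃, μ(A₁∩A₂∩A₃)=μ(A₁)μ(A₂)μ(A₃). -/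
/-!
Let `K` be a subgroup of the acting group and condition on the σ-algebra of `K`-invariant sets.
If `C` is invariant under a subgroup `H` with `K + H` the whole group, then, the group being
abelian, each translation by `h ∈ H` preserves this σ-algebra and commutes with the conditional
expectation, so `E[1_C | K-invariants]` is invariant under `K` and a.e. invariant under `H`.
Its level sets are then a.e. invariant under the whole action, so by ergodicity it is a.e.
constant, equal to `μ C`; hence `C` is independent of every `K`-invariant set `B`. For `ℤ³`,
apply this first with `K = {j = 0}`, `H = {k = 0}` (to `A₂`, `A₃`), then with
`K = {j = k = 0}`, `H = {i = 0}` (to `A₂ ∩ A₃`, `A₁`).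
-/

open Filter MeasureTheory MeasurableSpace

section CondExp

variable {Ω : Type*} {m m₀ : MeasurableSpace Ω} {μ : Measure Ω}

theorem condExp_comp_measurableEquiv_ae_eq (hm : m ≤ m₀) [SigmaFinite (μ.trim hm)]
    (τ : Ω ≃ᵐ Ω) (hτ : MeasurePreserving τ μ μ) (hτm : Measurable[m, m] τ)
    (hτm' : Measurable[m, m] τ.symm) {f : Ω → ℝ} (hf : Integrable f μ) :
    μ[f | m] ∘ τ =ᵐ[μ] μ[f ∘ τ | m] := by
  refine ae_eq_condExp_of_forall_setIntegral_eq hm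
    ((hτ.integrable_comp_emb τ.measurableEmbedding).2 hf) (fun s _ _ ↦ ?_) (fun s hs _ ↦ ?_)
    (stronglyMeasurable_condExp.comp_measurable hτm).aestronglyMeasurable
  · exact ((hτ.integrable_comp_emb τ.measurableEmbedding).2 integrable_condExp).integrableOn
  · have hs' : τ ⁻¹' (τ.symm ⁻¹' s) = s := by
      rw [← Set.preimage_comp, τ.symm_comp_self, Set.preimage_id]
    have hτs : MeasurableSet[m] (τ.symm ⁻¹' s) := hτm' hs
    calc ∫ x in s, (μ[f | m] ∘ τ) x ∂μ
        = ∫ x in τ ⁻¹' (τ.symm ⁻¹' s), μ[f | m] (τ x) ∂μ := by rw [hs']; rfl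
      _ = ∫ x in τ.symm ⁻¹' s, μ[f | m] x ∂μ :=
          hτ.setIntegral_preimage_emb τ.measurableEmbedding _ _
      _ = ∫ x in τ.symm ⁻¹' s, f x ∂μ := setIntegral_condExp hm hf hτs
      _ = ∫ x in τ ⁻¹' (τ.symm ⁻¹' s), f (τ x) ∂μ :=
          (hτ.setIntegral_preimage_emb τ.measurableEmbedding _ _).symm
      _ = ∫ x in s, (f ∘ τ) x ∂μ := by rw [hs']; rfl

end CondExp

section Action

variable {G Ω : Type*} [MeasurableSpace Ω] {μ : Measure Ω}

section AddGroup

variable [AddGroup G] [AddAction G Ω]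

theorem ErgodicVAdd.of_forall_preimage_eq [Countable G] [MeasurableConstVAdd G Ω]
    [VAddInvariantMeasure G Ω μ] [IsProbabilityMeasure μ]
    (h : ∀ s, MeasurableSet s → (∀ g : G, (g +ᵥ ·) ⁻¹' s = s) → μ s = 0 ∨ μ s = 1) :
    ErgodicVAdd G Ω μ where
  aeconst_of_forall_preimage_vadd_ae_eq {s} hs hinv := by
    -- `⋂ g, (g +ᵥ ·) ⁻¹' s` is a strictly invariant version of `s`
    set t := ⋂ g : G, (g +ᵥ ·) ⁻¹' s
    have hts : t =ᵐ[μ] s := by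
      simpa only [Set.iInter_const] using Filter.EventuallyEq.countable_iInter hinv
    have ht : MeasurableSet t := .iInter fun g ↦ measurable_const_vadd g hs
    have ht_inv : ∀ a : G, (a +ᵥ ·) ⁻¹' t = t := fun a ↦ by
      ext x
      simp only [t, Set.mem_preimage, Set.mem_iInter, vadd_vadd]
      exact (Equiv.addRight a).forall_congr fun _ ↦ Iff.rfl
    refine (eventuallyConst_set'.2 ?_).congr hts
    rw [ae_eq_empty, ae_eq_univ, prob_compl_eq_zero_iff ht]
    exact h t ht ht_inv

theorem AddAction.mem_aestabilizer_of_preimage_ae_eq [VAddInvariantMeasure G Ω μ] {a : G}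
    {s : Set Ω} (h : (a +ᵥ ·) ⁻¹' s =ᵐ[μ] s) : a ∈ AddAction.aestabilizer G μ s := by
  rw [← neg_mem_iff, AddAction.mem_aestabilizer, ← Set.preimage_vadd]
  exact h

theorem ErgodicVAdd.exists_ae_eq_const [ErgodicVAdd G Ω μ] {X : Type*} [Nonempty X]
    [MeasurableSpace X] [CountablySeparated X] {f : Ω → X} (hf : Measurable f)
    (h : ∀ U, MeasurableSet U → AddAction.aestabilizer G μ (f ⁻¹' U) = ⊤) :
    ∃ c, f =ᵐ[μ] Function.const Ω c :=
  exists_eventuallyEq_const_of_forall_separating MeasurableSet fun U hU ↦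
    eventuallyConst_set.1 <|
      AddAction.aeconst_of_aestabilizer_eq_top G (hf hU).nullMeasurableSet (h U hU)

end AddGroup

section AddCommGroup

variable [AddCommGroup G] [AddAction G Ω]

namespace MeasurableSpace

/-- The paper's `I̅ᵢ` is `vaddInvariants K` for `K = {p | pᵢ = 0}`. -/
abbrev vaddInvariants (K : AddSubgroup G) : MeasurableSpace Ω :=
  ⨅ k : K, invariants ((k : G) +ᵥ · : Ω → Ω)

variable {K : AddSubgroup G}

theorem vaddInvariants_le (K : AddSubgroup G) : vaddInvariants K ≤ ‹MeasurableSpace Ω› :=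
  iInf_le_of_le 0 (invariants_le _)

theorem vaddInvariants_le_invariants {k : G} (hk : k ∈ K) :
    vaddInvariants K ≤ invariants (k +ᵥ · : Ω → Ω) :=
  iInf_le (fun k : K ↦ invariants ((k : G) +ᵥ · : Ω → Ω)) ⟨k, hk⟩

theorem measurableSet_vaddInvariants_of_forall_preimage_eq {s : Set Ω} (hs : MeasurableSet s)
    (hK : ∀ k ∈ K, (k +ᵥ ·) ⁻¹' s = s) : MeasurableSet[vaddInvariants K] s :=
  measurableSet_iInf.2 fun k ↦ measurableSet_invariants.2 ⟨hs, hK k k.2⟩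

theorem comp_vadd_eq_of_measurable_vaddInvariants {X : Type*} [MeasurableSpace X]
    [MeasurableSingletonClass X] {f : Ω → X} (hf : Measurable[vaddInvariants K] f) {k : G}
    (hk : k ∈ K) : f ∘ (k +ᵥ ·) = f :=
  comp_eq_of_measurable_invariants (hf.mono (vaddInvariants_le_invariants hk) le_rfl)

theorem measurable_vadd_vaddInvariants [MeasurableConstVAdd G Ω] (a : G) :
    Measurable[vaddInvariants K, vaddInvariants K] (a +ᵥ · : Ω → Ω) := fun _ hs ↦
  measurableSet_iInf.2 fun k ↦
    measurable_invariants_of_semiconj (measurable_const_vadd a)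
      (fun x ↦ vadd_comm a (k : G) x) (measurableSet_iInf.1 hs k)

end MeasurableSpace

variable [MeasurableConstVAdd G Ω] [ErgodicVAdd G Ω μ] [IsProbabilityMeasure μ]
  {K H : AddSubgroup G} {C : Set Ω}

theorem condExp_indicator_vaddInvariants_ae_eq (hKH : K ⊔ H = ⊤) (hC : MeasurableSet C)
    (hCH : ∀ h ∈ H, (h +ᵥ ·) ⁻¹' C = C) :
    μ[C.indicator 1 | vaddInvariants K] =ᵐ[μ] fun _ ↦ μ.real C := by
  have hm := vaddInvariants_le (Ω := Ω) K
  have hf : Integrable (C.indicator (1 : Ω → ℝ)) μ := (integrable_const 1).indicator hC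
  set g := μ[C.indicator (1 : Ω → ℝ) | vaddInvariants K]
  have hgm : Measurable[vaddInvariants K] g := stronglyMeasurable_condExp.measurable
  have hgH : ∀ h ∈ H, g ∘ (h +ᵥ ·) =ᵐ[μ] g := fun h hh ↦ by
    have hCh : C.indicator 1 ∘ (h +ᵥ ·) = C.indicator (1 : Ω → ℝ) := by
      ext x
      rw [Function.comp_apply, ← Set.indicator_comp_right, hCH h hh]
      rfl
    have := condExp_comp_measurableEquiv_ae_eq hm (MeasurableEquiv.vadd h)
      (measurePreserving_vadd h μ) (measurable_vadd_vaddInvariants h)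
      (measurable_vadd_vaddInvariants (-h)) hf
    change g ∘ (h +ᵥ ·) =ᵐ[μ] μ[C.indicator 1 ∘ (h +ᵥ ·) | _] at this
    rwa [hCh] at this
  obtain ⟨c, hc⟩ : ∃ c, g =ᵐ[μ] fun _ ↦ c := by
    refine ErgodicVAdd.exists_ae_eq_const (G := G) (hgm.mono hm le_rfl) fun U _ ↦ ?_
    rw [eq_top_iff, ← hKH]
    refine sup_le (fun k hk ↦ AddAction.mem_aestabilizer_of_preimage_ae_eq ?_)
      (fun h hh ↦ AddAction.mem_aestabilizer_of_preimage_ae_eq ?_)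
    · rw [← Set.preimage_comp, comp_vadd_eq_of_measurable_vaddInvariants hgm hk]
      exact EventuallyEq.rfl
    · exact (hgH h hh).preimage U
  have hc_eq : c = μ.real C := by
    have := integral_condExp hm (f := C.indicator (1 : Ω → ℝ)) (μ := μ)
    rwa [integral_congr_ae hc, integral_indicator_one hC, integral_const,
      probReal_univ, one_smul] at this
  exact hc_eq ▸ hc

theorem measure_inter_eq_mul_of_sup_eq_top (hKH : K ⊔ H = ⊤) {B : Set Ω}
    (hB : MeasurableSet B) (hC : MeasurableSet C)
    (hBK : ∀ k ∈ K, (k +ᵥ ·) ⁻¹' B = B) (hCH : ∀ h ∈ H, (h +ᵥ ·) ⁻¹' C = C) :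
    μ (B ∩ C) = μ B * μ C := by
  have hBm := measurableSet_vaddInvariants_of_forall_preimage_eq hB hBK
  have hreal : μ.real (B ∩ C) = μ.real B * μ.real C := calc
    μ.real (B ∩ C) = ∫ x in B, C.indicator 1 x ∂μ := by
      rw [integral_indicator_one hC, measureReal_restrict_apply hC, Set.inter_comm]
    _ = ∫ x in B, (μ[C.indicator 1 | vaddInvariants K]) x ∂μ :=
      (setIntegral_condExp (vaddInvariants_le K) ((integrable_const 1).indicator hC) hBm).symm
    _ = ∫ _ in B, μ.real C ∂μ :=
      integral_congr_ae (ae_restrict_of_ae (condExp_indicator_vaddInvariants_ae_eq hKH hC hCH))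
    _ = μ.real B * μ.real C := by rw [setIntegral_const, smul_eq_mul]
  rwa [← ENNReal.toReal_eq_toReal_iff' (by finiteness) (by finiteness), ENNReal.toReal_mul]

end AddCommGroup

end Action

/-- **Independence of the three invariant σ-algebras.**
For an ergodic measure-preserving `ℤ³`-action `T` on a probability space,
if `A₁` is invariant under the sub-action `(T_{0,j,k})`, `A₂` under `(T_{i,0,k})`
and `A₃` under `(T_{i,j,0})`, then `μ (A₁ ∩ A₂ ∩ A₃) = μ A₁ * μ A₂ * μ A₃`. -/
theorem independence_of_invariant_sigma_algebras
    {Ω : Type*} [MeasurableSpace Ω] (μ : Measure Ω) [IsProbabilityMeasure μ]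
    (T : ℤ × ℤ × ℤ → Ω → Ω)
    (hT0 : T 0 = id)
    (hTadd : ∀ p q : ℤ × ℤ × ℤ, T (p + q) = T p ∘ T q)
    (hTmp : ∀ p, MeasurePreserving (T p) μ μ)
    (hTerg : ∀ s : Set Ω, MeasurableSet s → (∀ p, T p ⁻¹' s = s) → μ s = 0 ∨ μ s = 1)
    (A₁ A₂ A₃ : Set Ω)
    (hA₁ : MeasurableSet A₁) (hA₂ : MeasurableSet A₂) (hA₃ : MeasurableSet A₃)
    (hA₁inv : ∀ j k : ℤ, T (0, j, k) ⁻¹' A₁ = A₁)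
    (hA₂inv : ∀ i k : ℤ, T (i, 0, k) ⁻¹' A₂ = A₂)
    (hA₃inv : ∀ i j : ℤ, T (i, j, 0) ⁻¹' A₃ = A₃) :
    μ (A₁ ∩ A₂ ∩ A₃) = μ A₁ * μ A₂ * μ A₃ := by
  let : AddAction (ℤ × ℤ × ℤ) Ω :=
    { vadd := T, zero_vadd := congrFun hT0, add_vadd := fun p q ↦ congrFun (hTadd p q) }
  have : MeasurableConstVAdd (ℤ × ℤ × ℤ) Ω := ⟨fun p ↦ (hTmp p).measurable⟩
  have : VAddInvariantMeasure (ℤ × ℤ × ℤ) Ω μ :=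
    ⟨fun p _ hs ↦ (hTmp p).measure_preimage hs.nullMeasurableSet⟩
  have : ErgodicVAdd (ℤ × ℤ × ℤ) Ω μ := .of_forall_preimage_eq hTerg
  set K₁ := (AddMonoidHom.fst ℤ (ℤ × ℤ)).ker
  set K₂ := ((AddMonoidHom.fst ℤ ℤ).comp (AddMonoidHom.snd ℤ (ℤ × ℤ))).ker
  set K₃ := ((AddMonoidHom.snd ℤ ℤ).comp (AddMonoidHom.snd ℤ (ℤ × ℤ))).ker
  have hK₂₃ : K₂ ⊔ K₃ = ⊤ := eq_top_iff.2 fun p _ ↦ AddSubgroup.mem_sup.2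
    ⟨(p.1, 0, p.2.2), rfl, (0, p.2.1, 0), rfl, by simp⟩
  have hK₁ : K₂ ⊓ K₃ ⊔ K₁ = ⊤ := eq_top_iff.2 fun p _ ↦ AddSubgroup.mem_sup.2
    ⟨(p.1, 0, 0), ⟨rfl, rfl⟩, (0, p.2.1, p.2.2), rfl, by ext <;> simp⟩
  have hA₁K : ∀ p ∈ K₁, (p +ᵥ ·) ⁻¹' A₁ = A₁ := by
    rintro ⟨i, j, k⟩ (rfl : i = 0); exact hA₁inv j k
  have hA₂K : ∀ p ∈ K₂, (p +ᵥ ·) ⁻¹' A₂ = A₂ := by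
    rintro ⟨i, j, k⟩ (rfl : j = 0); exact hA₂inv i k
  have hA₃K : ∀ p ∈ K₃, (p +ᵥ ·) ⁻¹' A₃ = A₃ := by
    rintro ⟨i, j, k⟩ (rfl : k = 0); exact hA₃inv i j
  have h₂₃ : μ (A₂ ∩ A₃) = μ A₂ * μ A₃ :=
    measure_inter_eq_mul_of_sup_eq_top hK₂₃ hA₂ hA₃ hA₂K hA₃K
  have h₁ : μ (A₂ ∩ A₃ ∩ A₁) = μ (A₂ ∩ A₃) * μ A₁ :=
    measure_inter_eq_mul_of_sup_eq_top hK₁ (hA₂.inter hA₃) hA₁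
      (fun p hp ↦ by rw [Set.preimage_inter, hA₂K p hp.1, hA₃K p hp.2]) hA₁K
  rw [Set.inter_assoc, Set.inter_comm, h₁, h₂₃]
  ring
end

section
/- Let U=(U_{i,j}) be a measure-preserving ℤ²-action on a probability space (X,B,ν), let J be the σ-algebra of U-invariant sets, let F be a U-invariant sub-σ-algebra of B (i.e. U_{i,j}(F)=F for all i,j), and let C be a sub-σ-algebra of F. Then for every f ∈ L²(J∨C), the conditional expectation E[f | F] is (J∨C)-measurable. -/
open MeasureTheory

/-- The σ-algebra of subsets of `X` that are `m`-measurable and invariant under every map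
of the family `U : ι → X → X`. -/
def invariantSets {X ι : Type*} (m : MeasurableSpace X) (U : ι → X → X) :
    MeasurableSpace X where
  MeasurableSet' s := MeasurableSet[m] s ∧ ∀ i, U i ⁻¹' s = s
  measurableSet_empty := ⟨m.measurableSet_empty, fun _ => by simp⟩
  measurableSet_compl := fun s hs =>
    ⟨m.measurableSet_compl s hs.1, fun i => by rw [Set.preimage_compl, hs.2 i]⟩
  measurableSet_iUnion := fun f hf =>
    ⟨m.measurableSet_iUnion f (fun n => (hf n).1), fun i => by
      rw [Set.preimage_iUnion]
      exact Set.iUnion_congr fun n => (hf n).2 i⟩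

/-!
For `A` invariant, `E[1_A | F] ∘ U_p = E[1_A ∘ U_p | F] = E[1_A | F]` because `U_p` preserves
both `ν` and `F`; so `E[1_A | F]` is a.e. invariant, hence `J`-measurable. For `B ∈ C ⊆ F`,
`E[1_{A ∩ B} | F] = 1_B E[1_A | F]` is then `(J ∨ C)`-measurable. The sets `A ∩ B` form a
π-system generating `J ∨ C`, and the functions whose conditional expectation is
`(J ∨ C)`-measurable are closed under linear combinations and `L¹` limits, so a Dynkin
argument followed by density of simple functions concludes.
-/

open Filter Set Topology Function

namespace MeasurableSpace

variable {X : Type*}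

theorem isPiSystem_image2_inter (m₁ m₂ : MeasurableSpace X) :
    IsPiSystem (image2 (· ∩ ·) {s | MeasurableSet[m₁] s} {s | MeasurableSet[m₂] s}) := by
  rintro _ ⟨A₁, hA₁, B₁, hB₁, rfl⟩ _ ⟨A₂, hA₂, B₂, hB₂, rfl⟩ -
  exact ⟨A₁ ∩ A₂, hA₁.inter hA₂, B₁ ∩ B₂, hB₁.inter hB₂, (inter_inter_inter_comm A₁ B₁ A₂ B₂).symm⟩

theorem sup_eq_generateFrom_image2_inter (m₁ m₂ : MeasurableSpace X) :
    m₁ ⊔ m₂ =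
      generateFrom (image2 (· ∩ ·) {s | MeasurableSet[m₁] s} {s | MeasurableSet[m₂] s}) := by
  refine le_antisymm (sup_le ?_ ?_) (generateFrom_le ?_)
  · exact fun s hs => measurableSet_generateFrom ⟨s, hs, univ, MeasurableSet.univ, inter_univ s⟩
  · exact fun s hs => measurableSet_generateFrom ⟨univ, MeasurableSet.univ, s, hs, univ_inter s⟩
  · rintro _ ⟨A, hA, B, hB, rfl⟩
    exact (le_sup_left (a := m₁) (b := m₂) A hA).inter (le_sup_right (a := m₁) (b := m₂) B hB)

end MeasurableSpace

section CondExp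

variable {X E : Type*} [NormedAddCommGroup E] [NormedSpace ℝ E] [CompleteSpace E]
  {m F m0 : MeasurableSpace X} {ν : Measure X}

theorem condExp_comp_measurableEquiv_ae_eq_s1 (hF : F ≤ m0) [SigmaFinite (ν.trim hF)]
    (e : X ≃ᵐ X) (he : MeasurePreserving e ν ν)
    (heF : ∀ s, MeasurableSet[F] s → MeasurableSet[F] (e ⁻¹' s))
    (heF' : ∀ s, MeasurableSet[F] s → MeasurableSet[F] (e.symm ⁻¹' s))
    {g : X → E} (hg : Integrable g ν) :
    ν[g ∘ e|F] =ᵐ[ν] ν[g|F] ∘ e := by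
  have hcomp : ∀ {h : X → E}, Integrable h ν → Integrable (h ∘ e) ν := fun h =>
    (he.integrable_comp_emb e.measurableEmbedding).2 h
  refine (ae_eq_condExp_of_forall_setIntegral_eq hF (hcomp hg)
    (fun s _ _ => (hcomp integrable_condExp).integrableOn) (fun s hs _ => ?_) ?_).symm
  · have hs' : s = e ⁻¹' (e.symm ⁻¹' s) := by
      rw [← preimage_comp, MeasurableEquiv.symm_comp_self, preimage_id]
    rw [hs']
    simp only [comp_apply, he.setIntegral_preimage_emb e.measurableEmbedding]
    exact setIntegral_condExp hF hg (heF' s hs)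
  · exact (stronglyMeasurable_condExp.comp_measurable
      (fun s hs => heF s hs)).aestronglyMeasurable

theorem aestronglyMeasurable_condExp_iff_condExpL1 (hF : F ≤ m0) [SigmaFinite (ν.trim hF)]
    (g : X → E) :
    AEStronglyMeasurable[m] (ν[g|F]) ν ↔ AEStronglyMeasurable[m] (condExpL1 hF ν g) ν :=
  aestronglyMeasurable_congr (condExp_ae_eq_condExpL1 hF g)

theorem isClosed_setOf_aestronglyMeasurable_condExp (hF : F ≤ m0) [SigmaFinite (ν.trim hF)]
    (hm : m ≤ m0) : IsClosed {g : X →₁[ν] E | AEStronglyMeasurable[m] (ν[g|F]) ν} := by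
  have hset : {g : X →₁[ν] E | AEStronglyMeasurable[m] (ν[g|F]) ν} =
      condExpL1CLM E hF ν ⁻¹' {h | AEStronglyMeasurable[m] h ν} := by
    ext g
    refine (aestronglyMeasurable_condExp_iff_condExpL1 hF _).trans ?_
    rw [condExpL1_eq (L1.integrable_coeFn g), Integrable.toL1_coeFn]
    rfl
  rw [hset]
  exact (isClosed_aestronglyMeasurable hm).preimage (condExpL1CLM E hF ν).continuous

theorem aestronglyMeasurable_condExp_of_tendsto_ae (hF : F ≤ m0) [SigmaFinite (ν.trim hF)]
    (hm : m ≤ m0) {gs : ℕ → X → E} {g : X → E} (bound : X → ℝ)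
    (hgs_meas : ∀ n, AEStronglyMeasurable (gs n) ν) (h_int_bound : Integrable bound ν)
    (h_bound : ∀ n, ∀ᵐ x ∂ν, ‖gs n x‖ ≤ bound x)
    (h_lim : ∀ᵐ x ∂ν, Tendsto (fun n => gs n x) atTop (𝓝 (g x)))
    (hgs : ∀ n, AEStronglyMeasurable[m] (ν[gs n|F]) ν) :
    AEStronglyMeasurable[m] (ν[g|F]) ν := by
  rw [aestronglyMeasurable_condExp_iff_condExpL1 hF]
  exact (isClosed_aestronglyMeasurable (p := 1) hm).mem_of_tendsto
    (tendsto_condExpL1_of_dominated_convergence hF bound hgs_meas h_int_bound h_bound h_lim)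
    (Eventually.of_forall fun n => (aestronglyMeasurable_condExp_iff_condExpL1 hF _).1 (hgs n))

end CondExp

section Invariant

variable {X G : Type*} {F m0 : MeasurableSpace X} {ν : Measure X} {U : G → X → X}

theorem measurable_invariantSets_of_comp_eq {β : Type*} [MeasurableSpace β] {g : X → β}
    (hg : Measurable g) (hgU : ∀ p, g ∘ U p = g) : Measurable[invariantSets m0 U] g :=
  fun t ht => ⟨hg ht, fun p => by rw [← preimage_comp, hgU p]⟩

theorem preimage_setOf_forall_comp_eq [AddGroup G] (hU0 : U 0 = id)
    (hUadd : ∀ p q : G, U (p + q) = U p ∘ U q) {β : Type*} (g : X → β) (q : G) :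
    U q ⁻¹' {x | ∀ p, g (U p x) = g x} = {x | ∀ p, g (U p x) = g x} := by
  have hcomp : ∀ p x, U p (U q x) = U (p + q) x := fun p x => by rw [hUadd]; rfl
  ext x
  simp only [mem_preimage, mem_ofPred_eq, hcomp]
  refine ⟨fun h p => ?_, fun h p => by rw [h, h]⟩
  have hp := h (p - q)
  have h0 := h (-q)
  rw [sub_add_cancel] at hp
  rw [neg_add_cancel, hU0] at h0
  rw [hp, ← h0]
  rfl

/-- On the invariant set where `g` is constant along orbits, `g` itself is invariant; off it,
replace `g` by `0`. -/
theorem aestronglyMeasurable_invariantSets_of_comp_ae_eq [AddGroup G] [Countable G]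
    (hU0 : U 0 = id) (hUadd : ∀ p q : G, U (p + q) = U p ∘ U q) (hUm : ∀ p, Measurable (U p))
    {g : X → ℝ} (hg : Measurable g) (hgU : ∀ p, g ∘ U p =ᵐ[ν] g) :
    AEStronglyMeasurable[invariantSets m0 U] g ν := by
  set S := {x | ∀ p, g (U p x) = g x}
  have hS : MeasurableSet S := by
    simp only [S, ofPred_forall]
    exact .iInter fun p => measurableSet_eq_fun (hg.comp (hUm p)) hg
  have hSU : ∀ p x, U p x ∈ S ↔ x ∈ S := fun p x => by
    rw [← mem_preimage, preimage_setOf_forall_comp_eq hU0 hUadd]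
  have hgS : ∀ p, S.indicator g ∘ U p = S.indicator g := fun p => funext fun x => by
    by_cases hx : x ∈ S
    · simp [indicator_of_mem hx, indicator_of_mem ((hSU p x).2 hx), hx p]
    · simp [indicator_of_notMem hx, indicator_of_notMem (mt (hSU p x).1 hx)]
  refine ⟨S.indicator g,
    (measurable_invariantSets_of_comp_eq (hg.indicator hS) hgS).stronglyMeasurable, ?_⟩
  filter_upwards [ae_all_iff.2 hgU] with x hx
  exact (indicator_of_mem (show x ∈ S from hx) g).symm

theorem aestronglyMeasurable_invariantSets_condExp [AddGroup G] [Countable G] (hU0 : U 0 = id)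
    (hUadd : ∀ p q : G, U (p + q) = U p ∘ U q) (hUmp : ∀ p, MeasurePreserving (U p) ν ν)
    (hF : F ≤ m0) [SigmaFinite (ν.trim hF)]
    (hFinv : ∀ p s, MeasurableSet[F] s → MeasurableSet[F] (U p ⁻¹' s))
    {g : X → ℝ} (hg : Integrable g ν) (hgU : ∀ p, g ∘ U p = g) :
    AEStronglyMeasurable[invariantSets m0 U] (ν[g|F]) ν := by
  have hinv : ∀ p x, U (-p) (U p x) = x := fun p x => by
    rw [← comp_apply (f := U (-p)), ← hUadd, neg_add_cancel, hU0, id]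
  have hinv' : ∀ p x, U p (U (-p) x) = x := fun p x => by simpa using hinv (-p) x
  refine aestronglyMeasurable_invariantSets_of_comp_ae_eq hU0 hUadd (fun p => (hUmp p).measurable)
    (stronglyMeasurable_condExp.mono hF).measurable fun p => ?_
  let e : X ≃ᵐ X :=
    ⟨⟨U p, U (-p), hinv p, hinv' p⟩, (hUmp p).measurable, (hUmp (-p)).measurable⟩
  calc ν[g|F] ∘ U p
      =ᵐ[ν] ν[g ∘ U p|F] :=
        (condExp_comp_measurableEquiv_ae_eq_s1 hF e (hUmp p) (hFinv p) (hFinv (-p)) hg).symm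
    _ = ν[g|F] := by rw [hgU p]

end Invariant

section Dynkin

variable {X : Type*} {m₁ m₂ F m0 : MeasurableSpace X} {ν : Measure X}

theorem MeasurableSet.accumulate {m : MeasurableSpace X} {f : ℕ → Set X}
    (hf : ∀ i, MeasurableSet[m] (f i)) (n : ℕ) : MeasurableSet[m] (accumulate f n) := by
  rw [accumulate_def]
  exact .biUnion (to_countable _) fun i _ => hf i

theorem aestronglyMeasurable_condExp_indicator_accumulate {m : MeasurableSpace X}
    [IsFiniteMeasure ν] (hm : m ≤ m0) {f : ℕ → Set X} (hdisj : Pairwise (Disjoint on f))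
    (hfm : ∀ i, MeasurableSet[m] (f i))
    (hf : ∀ i, AEStronglyMeasurable[m] (ν[(f i).indicator (1 : X → ℝ)|F]) ν) (n : ℕ) :
    AEStronglyMeasurable[m] (ν[(accumulate f n).indicator (1 : X → ℝ)|F]) ν := by
  induction n with
  | zero => simpa using hf 0
  | succ n ih =>
    have hint : ∀ s, MeasurableSet[m] s → Integrable (s.indicator (1 : X → ℝ)) ν :=
      fun s hs => (integrable_const 1).indicator (hm s hs)
    rw [accumulate_succ, indicator_union_of_disjoint (disjoint_accumulate hdisj (lt_add_one n))]
    exact (ih.add (hf (n + 1))).congr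
      (condExp_add (hint _ (.accumulate hfm n)) (hint _ (hfm _)) F).symm

theorem aestronglyMeasurable_sup_condExp_indicator [IsFiniteMeasure ν] (hF : F ≤ m0)
    (hm₁ : m₁ ≤ m0) (hm₂ : m₂ ≤ F)
    (h₁ : ∀ s, MeasurableSet[m₁] s → AEStronglyMeasurable[m₁] (ν[s.indicator (1 : X → ℝ)|F]) ν)
    {t : Set X} (ht : MeasurableSet[m₁ ⊔ m₂] t) :
    AEStronglyMeasurable[m₁ ⊔ m₂] (ν[t.indicator (1 : X → ℝ)|F]) ν := by
  have hm : m₁ ⊔ m₂ ≤ m0 := sup_le hm₁ (hm₂.trans hF)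
  have hint : ∀ s, MeasurableSet[m₁ ⊔ m₂] s → Integrable (s.indicator (1 : X → ℝ)) ν :=
    fun s hs => (integrable_const 1).indicator (hm s hs)
  induction t, ht using MeasurableSpace.induction_on_inter
    (MeasurableSpace.sup_eq_generateFrom_image2_inter m₁ m₂)
    (MeasurableSpace.isPiSystem_image2_inter m₁ m₂) with
  | empty => simpa using aestronglyMeasurable_const
  | basic t ht =>
    obtain ⟨A, hA, B, hB, rfl⟩ := ht
    have hAF := (h₁ A hA).mono (le_sup_left : m₁ ≤ m₁ ⊔ m₂)
    have hcond : ν[(A ∩ B).indicator (1 : X → ℝ)|F] =ᵐ[ν] B.indicator (ν[A.indicator 1|F]) := by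
      rw [inter_comm, ← indicator_indicator]
      exact condExp_indicator ((integrable_const 1).indicator (hm₁ A hA)) (hm₂ B hB)
    exact ⟨B.indicator (hAF.mk _), hAF.stronglyMeasurable_mk.indicator
      (le_sup_right (a := m₁) (b := m₂) B hB), hcond.trans hAF.ae_eq_mk.indicator⟩
  | compl t htm ih =>
    have hsub := condExp_sub (integrable_const (1 : ℝ)) (hint t htm) F
    rw [condExp_const hF] at hsub
    rw [indicator_compl]
    exact (aestronglyMeasurable_const.sub ih).congr hsub.symm
  | iUnion f hdisj hfm ih =>
    refine aestronglyMeasurable_condExp_of_tendsto_ae hF hm 1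
      (fun n => (hint _ (.accumulate hfm n)).aestronglyMeasurable) (integrable_const 1)
      (fun n => Eventually.of_forall fun x => ?_) (Eventually.of_forall fun x => ?_)
      (aestronglyMeasurable_condExp_indicator_accumulate hm hdisj hfm ih)
    · exact (norm_indicator_le_norm_self _ x).trans_eq (by simp)
    · rw [← iUnion_accumulate]
      exact (monotone_accumulate.tendsto_indicator _ 1 x).mono_right (pure_le_nhds _)

theorem aestronglyMeasurable_condExp_of_indicator [IsFiniteMeasure ν] {m : MeasurableSpace X}
    (hF : F ≤ m0) (hm : m ≤ m0)
    (hind : ∀ s, MeasurableSet[m] s → AEStronglyMeasurable[m] (ν[s.indicator (1 : X → ℝ)|F]) ν)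
    {f : X → ℝ} (hf : Integrable f ν) (hfm : AEStronglyMeasurable[m] f ν) :
    AEStronglyMeasurable[m] (ν[f|F]) ν := by
  refine MemLp.induction_stronglyMeasurable hm ENNReal.one_ne_top
    (fun g => AEStronglyMeasurable[m] (ν[g|F]) ν) (fun c s hs _ => ?_)
    (fun g h _ hg hh _ _ hPg hPh => ?_)
    ((isClosed_setOf_aestronglyMeasurable_condExp hF hm).preimage continuous_subtype_val)
    (fun g h hgh _ hPg => hPg.congr (condExp_congr_ae hgh)) (memLp_one_iff_integrable.2 hf) hfm
  · have hc : s.indicator (fun _ => c) = c • s.indicator (1 : X → ℝ) := by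
      ext x
      by_cases hx : x ∈ s <;> simp [hx]
    rw [hc]
    exact ((hind s hs).const_smul c).congr (condExp_smul c _ F).symm
  · exact (hPg.add hPh).congr
      (condExp_add (memLp_one_iff_integrable.1 hg) (memLp_one_iff_integrable.1 hh) F).symm

end Dynkin

/-- **Projection measurability, first half.**
Let `U` be a measure-preserving `ℤ²`-action on a probability space `(X, B, ν)`, `J` the
σ-algebra of `U`-invariant sets, `F` a `U`-invariant sub-σ-algebra of `B` and `C` a
sub-σ-algebra of `F`.  Then for every `f ∈ L²(J ∨ C)`, the conditional expectation
`E[f | F]` is `(J ∨ C)`-measurable (modulo null sets). -/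
theorem condexp_invariant_measurable_join
    {X : Type*} [m0 : MeasurableSpace X] (ν : Measure X) [IsProbabilityMeasure ν]
    (U : ℤ × ℤ → X → X)
    (hU0 : U 0 = id)
    (hUadd : ∀ p q : ℤ × ℤ, U (p + q) = U p ∘ U q)
    (hUmp : ∀ p, MeasurePreserving (U p) ν ν)
    (F : MeasurableSpace X) (hF : F ≤ m0)
    (hFinv : ∀ (p : ℤ × ℤ) (s : Set X), MeasurableSet[F] s → MeasurableSet[F] (U p ⁻¹' s))
    (C : MeasurableSpace X) (hC : C ≤ F)
    (f : X → ℝ) (hf2 : MemLp f 2 ν)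
    (hfmeas : AEStronglyMeasurable[invariantSets m0 U ⊔ C] f ν) :
    AEStronglyMeasurable[invariantSets m0 U ⊔ C] (ν[f|F]) ν := by
  have hJ : invariantSets m0 U ≤ m0 := fun s hs => hs.1
  have hJind : ∀ s, MeasurableSet[invariantSets m0 U] s →
      AEStronglyMeasurable[invariantSets m0 U] (ν[s.indicator (1 : X → ℝ)|F]) ν :=
    fun s hs => aestronglyMeasurable_invariantSets_condExp hU0 hUadd hUmp hF hFinv
      ((integrable_const 1).indicator hs.1) fun p => by
        ext x
        rw [comp_apply, ← indicator_comp_right, hs.2 p]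
        rfl
  exact aestronglyMeasurable_condExp_of_indicator hF (sup_le hJ (hC.trans hF))
    (fun t ht => aestronglyMeasurable_sup_condExp_indicator hF hJ hC hJind ht)
    (hf2.integrable one_le_two) hfmeas
end

section
/- Let U=(U_{i,j}) be a measure-preserving ℤ²-action on a probability space (X,B,ν), let J be the σ-algebra of U-invariant sets, let F be a U-invariant sub-σ-algebra of B, and let C be a sub-σ-algebra of F. Then the conditional expectations with respect to F and with respect to J∨C commute: for all f ∈ L²(B), E[E[f | J∨C] | F] = E[E[f | F] | J∨C] = E[f | F ∩ (J∨C)]. -/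
/-!
Write `J` for the invariant σ-algebra, `G = J ⊔ C` and `K = F ⊓ G`. Everything follows from
`E[1_s | F] = E[1_s | K]` for `s ∈ G`. Indeed, by self-adjointness of conditional expectation,
`∫_s E[f | m] = ∫ E[1_s | m] f`, this makes `E[E[f | F] | G]` and `E[f | K]` agree on `G`-sets;
applied to `f = 1_B` with `B ∈ F` it yields the mirror statement `E[1_B | G] = E[1_B | K]`, hence
also `E[E[f | G] | F] = E[f | K]`.

Both sides of the claim are countably additive in `s`, so it suffices to take `s = a ∩ b` with
`a ∈ J`, `b ∈ C`, and pulling out the `K`-measurable `1_b` reduces it to `a ∈ J`. There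
`E[1_a | F]` is a.e. invariant, because `F` is invariant and the action preserves `ν`; as the
acting group is countable, it agrees a.e. with a genuinely invariant `F`-measurable function,
which is `J ⊓ F`-measurable, hence `K`-measurable.
-/

open MeasureTheory

open Filter Function

theorem IsPiSystem.image2_inter {X : Type*} {S T : Set (Set X)} (hS : IsPiSystem S)
    (hT : IsPiSystem T) : IsPiSystem (Set.image2 (· ∩ ·) S T) := by
  rintro _ ⟨a, ha, b, hb, rfl⟩ _ ⟨a', ha', b', hb', rfl⟩ hne
  refine ⟨a ∩ a', hS a ha a' ha' (hne.mono ?_), b ∩ b', hT b hb b' hb' (hne.mono ?_),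
    (Set.inter_inter_inter_comm a b a' b').symm⟩
  · exact Set.inter_subset_inter Set.inter_subset_left Set.inter_subset_left
  · exact Set.inter_subset_inter Set.inter_subset_right Set.inter_subset_right

theorem MeasurableSpace.sup_eq_generateFrom_image2_inter_s3 {X : Type*}
    (m₁ m₂ : MeasurableSpace X) :
    m₁ ⊔ m₂ =
      generateFrom (Set.image2 (· ∩ ·) {s | MeasurableSet[m₁] s} {t | MeasurableSet[m₂] t}) := by
  refine le_antisymm (sup_le (fun s hs => ?_) (fun t ht => ?_)) ?_
  · exact measurableSet_generateFrom ⟨s, hs, Set.univ, .univ, Set.inter_univ s⟩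
  · exact measurableSet_generateFrom ⟨Set.univ, .univ, t, ht, Set.univ_inter t⟩
  · refine generateFrom_le ?_
    rintro _ ⟨s, hs, t, ht, rfl⟩
    exact (le_sup_left (b := m₂) s hs).inter (le_sup_right (a := m₁) t ht)

theorem MeasurableSpace.comap_eq_of_measurable_action {X ι : Type*} [AddGroup ι]
    {U : ι → X → X} {F : MeasurableSpace X} (hU0 : U 0 = id)
    (hUadd : ∀ p q, U (p + q) = U p ∘ U q) (hUF : ∀ p, Measurable[F, F] (U p)) (p : ι) :
    F.comap (U p) = F := by
  refine le_antisymm (hUF p).comap_le fun s hs => ⟨U (-p) ⁻¹' s, hUF (-p) hs, ?_⟩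
  rw [← Set.preimage_comp, ← hUadd, neg_add_cancel, hU0, Set.preimage_id]

namespace MeasureTheory

variable {X : Type*} {m m₁ m₂ F G K J C : MeasurableSpace X} [m0 : MeasurableSpace X]
  {μ : Measure X}

section FiniteMeasure

variable [IsFiniteMeasure μ]

theorem integral_condExp_indicator_mul (hm : m ≤ m0) {B : Set X} (hB : MeasurableSet B)
    {f : X → ℝ} (hf : Integrable f μ) :
    ∫ x, μ[B.indicator (1 : X → ℝ)|m] x * f x ∂μ = ∫ x in B, μ[f|m] x ∂μ := by
  have hB_int : Integrable (B.indicator (1 : X → ℝ)) μ := (integrable_const 1).indicator hB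
  have hbdd : ∀ᵐ x ∂μ, ‖μ[B.indicator (1 : X → ℝ)|m] x‖ ≤ 1 := by
    simpa only [Real.norm_eq_abs] using ae_bdd_abs_condExp_of_ae_bdd_abs (m := m) (R := (1 : ℝ))
      (Eventually.of_forall fun x => by by_cases hx : x ∈ B <;> simp [hx])
  have hind_mul : B.indicator (1 : X → ℝ) * μ[f|m] = B.indicator (μ[f|m]) := by
    ext x; by_cases hx : x ∈ B <;> simp [hx]
  calc ∫ x, μ[B.indicator (1 : X → ℝ)|m] x * f x ∂μ
      = ∫ x, μ[μ[B.indicator (1 : X → ℝ)|m] * f|m] x ∂μ := (integral_condExp hm).symm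
    _ = ∫ x, μ[B.indicator (1 : X → ℝ) * μ[f|m]|m] x ∂μ := by
        refine integral_congr_ae ?_
        refine (condExp_mul_of_stronglyMeasurable_left stronglyMeasurable_condExp
          (hf.bdd_mul (stronglyMeasurable_condExp.mono hm).aestronglyMeasurable hbdd) hf).trans ?_
        refine (condExp_mul_of_stronglyMeasurable_right stronglyMeasurable_condExp ?_ hB_int).symm
        rw [hind_mul]
        exact integrable_condExp.indicator hB
    _ = ∫ x in B, μ[f|m] x ∂μ := by
        rw [integral_condExp hm, ← integral_indicator hB, hind_mul]

theorem condExp_condExp_ae_eq_condExp_inf (hF : F ≤ m0) (hG : G ≤ m0)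
    (h : ∀ s, MeasurableSet[G] s →
      μ[s.indicator (1 : X → ℝ)|F] =ᵐ[μ] μ[s.indicator (1 : X → ℝ)|F ⊓ G])
    {f : X → ℝ} (hf : Integrable f μ) :
    μ[μ[f|F]|G] =ᵐ[μ] μ[f|F ⊓ G] := by
  refine (ae_eq_condExp_of_forall_setIntegral_eq hG integrable_condExp
    (fun s _ _ => integrable_condExp.integrableOn) (fun s hs _ => ?_)
    (stronglyMeasurable_condExp.mono inf_le_right).aestronglyMeasurable).symm
  calc ∫ x in s, μ[f|F ⊓ G] x ∂μ
      = ∫ x, μ[s.indicator (1 : X → ℝ)|F ⊓ G] x * f x ∂μ :=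
        (integral_condExp_indicator_mul (inf_le_left.trans hF) (hG s hs) hf).symm
    _ = ∫ x, μ[s.indicator (1 : X → ℝ)|F] x * f x ∂μ :=
        integral_congr_ae ((h s hs).symm.mul EventuallyEq.rfl)
    _ = ∫ x in s, μ[f|F] x ∂μ := integral_condExp_indicator_mul hF (hG s hs) hf

theorem condExp_indicator_ae_eq_condExp_inf_symm (hF : F ≤ m0) (hG : G ≤ m0)
    (h : ∀ s, MeasurableSet[G] s →
      μ[s.indicator (1 : X → ℝ)|F] =ᵐ[μ] μ[s.indicator (1 : X → ℝ)|F ⊓ G])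
    {B : Set X} (hB : MeasurableSet[F] B) :
    μ[B.indicator (1 : X → ℝ)|G] =ᵐ[μ] μ[B.indicator (1 : X → ℝ)|G ⊓ F] := by
  have hB_int : Integrable (B.indicator (1 : X → ℝ)) μ :=
    (integrable_const 1).indicator (hF B hB)
  have := condExp_condExp_ae_eq_condExp_inf hF hG h hB_int
  rwa [condExp_of_stronglyMeasurable hF (stronglyMeasurable_one.indicator hB) hB_int,
    inf_comm] at this

theorem condExp_indicator_compl_ae_eq (hm₁ : m₁ ≤ m0) (hm₂ : m₂ ≤ m0) {t : Set X}
    (htm : MeasurableSet t)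
    (ht : μ[t.indicator (1 : X → ℝ)|m₁] =ᵐ[μ] μ[t.indicator (1 : X → ℝ)|m₂]) :
    μ[tᶜ.indicator (1 : X → ℝ)|m₁] =ᵐ[μ] μ[tᶜ.indicator (1 : X → ℝ)|m₂] := by
  have ht_int : Integrable (t.indicator (1 : X → ℝ)) μ := (integrable_const 1).indicator htm
  rw [Set.indicator_compl]
  refine (condExp_sub (integrable_const 1) ht_int m₁).trans ?_
  refine EventuallyEq.trans ?_ (condExp_sub (integrable_const 1) ht_int m₂).symm
  rw [Pi.one_def, condExp_const hm₁, condExp_const hm₂]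
  exact EventuallyEq.rfl.sub ht

theorem condExp_indicator_iUnion_ae_eq {t : ℕ → Set X} (hdisj : Pairwise (Disjoint on t))
    (htm : ∀ i, MeasurableSet (t i))
    (ht : ∀ i, μ[(t i).indicator (1 : X → ℝ)|m₁] =ᵐ[μ] μ[(t i).indicator (1 : X → ℝ)|m₂]) :
    μ[(⋃ i, t i).indicator (1 : X → ℝ)|m₁] =ᵐ[μ] μ[(⋃ i, t i).indicator (1 : X → ℝ)|m₂] := by
  have h_meas : ∀ i, AEStronglyMeasurable ((t i).indicator (1 : X → ℝ)) μ :=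
    fun i => (stronglyMeasurable_one.indicator (htm i)).aestronglyMeasurable
  have h_sum : ∑' i, ∫⁻ x, ‖(t i).indicator (1 : X → ℝ) x‖ₑ ∂μ ≠ ⊤ := by
    have h_lintegral : ∀ i, ∫⁻ x, ‖(t i).indicator (1 : X → ℝ) x‖ₑ ∂μ = μ (t i) := by
      intro i
      simp [enorm_indicator_eq_indicator_enorm, lintegral_indicator (htm i)]
    simp_rw [h_lintegral, ← measure_iUnion hdisj htm]
    exact measure_ne_top μ _
  rw [indicator_iUnion_of_pairwise_disjoint t hdisj]
  refine (condExp_tsum h_meas h_sum).trans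
    (EventuallyEq.trans ?_ (condExp_tsum h_meas h_sum).symm)
  filter_upwards [ae_all_iff.2 ht] with x hx
  simp only [hx]

theorem condExp_indicator_ae_eq_of_isPiSystem (hm₁ : m₁ ≤ m0) (hm₂ : m₂ ≤ m0) (hG : G ≤ m0)
    {S : Set (Set X)} (hGS : G = MeasurableSpace.generateFrom S) (hS : IsPiSystem S)
    (h : ∀ s ∈ S, μ[s.indicator (1 : X → ℝ)|m₁] =ᵐ[μ] μ[s.indicator (1 : X → ℝ)|m₂])
    {s : Set X} (hs : MeasurableSet[G] s) :
    μ[s.indicator (1 : X → ℝ)|m₁] =ᵐ[μ] μ[s.indicator (1 : X → ℝ)|m₂] := by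
  refine MeasurableSpace.induction_on_inter hGS hS ?_ h ?_ ?_ s hs
  · simp
  · exact fun t htm ht => condExp_indicator_compl_ae_eq hm₁ hm₂ (hG t htm) ht
  · exact fun t hdisj htm ht =>
      condExp_indicator_iUnion_ae_eq hdisj (fun i => hG _ (htm i)) ht

theorem condExp_indicator_sup_ae_eq (hJ : J ≤ m0) (hF : F ≤ m0) (hC : C ≤ F)
    (h : ∀ a, MeasurableSet[J] a →
      μ[a.indicator (1 : X → ℝ)|F] =ᵐ[μ] μ[a.indicator (1 : X → ℝ)|F ⊓ (J ⊔ C)])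
    {s : Set X} (hs : MeasurableSet[J ⊔ C] s) :
    μ[s.indicator (1 : X → ℝ)|F] =ᵐ[μ] μ[s.indicator (1 : X → ℝ)|F ⊓ (J ⊔ C)] := by
  refine condExp_indicator_ae_eq_of_isPiSystem hF (inf_le_left.trans hF)
    (sup_le hJ (hC.trans hF)) (MeasurableSpace.sup_eq_generateFrom_image2_inter_s3 J C)
    ((@MeasurableSpace.isPiSystem_measurableSet X J).image2_inter
      (@MeasurableSpace.isPiSystem_measurableSet X C)) ?_ hs
  rintro _ ⟨a, ha, b, hb, rfl⟩
  have hb_inf : MeasurableSet[F ⊓ (J ⊔ C)] b :=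
    MeasurableSpace.measurableSet_inf.2 ⟨hC b hb, le_sup_right (a := J) b hb⟩
  have hab_int : Integrable (a.indicator (1 : X → ℝ) * b.indicator 1) μ := by
    rw [← Set.inter_indicator_one]
    exact (integrable_const 1).indicator ((hJ a ha).inter (hF b (hC b hb)))
  have ha_int : Integrable (a.indicator (1 : X → ℝ)) μ :=
    (integrable_const 1).indicator (hJ a ha)
  rw [Set.inter_indicator_one]
  calc μ[a.indicator 1 * b.indicator 1|F]
      =ᵐ[μ] μ[a.indicator 1|F] * b.indicator 1 :=
        condExp_mul_of_stronglyMeasurable_right (stronglyMeasurable_one.indicator (hC b hb))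
          hab_int ha_int
    _ =ᵐ[μ] μ[a.indicator 1|F ⊓ (J ⊔ C)] * b.indicator 1 := (h a ha).mul EventuallyEq.rfl
    _ =ᵐ[μ] μ[a.indicator 1 * b.indicator 1|F ⊓ (J ⊔ C)] :=
        (condExp_mul_of_stronglyMeasurable_right (stronglyMeasurable_one.indicator hb_inf)
          hab_int ha_int).symm

theorem condExp_ae_eq_condExp_of_aestronglyMeasurable (hF : F ≤ m0) (hKF : K ≤ F)
    {f : X → ℝ} (h : AEStronglyMeasurable[K] (μ[f|F]) μ) :
    μ[f|F] =ᵐ[μ] μ[f|K] :=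
  (condExp_of_aestronglyMeasurable' (hKF.trans hF) h integrable_condExp).symm.trans
    (condExp_condExp_of_le hKF hF)

end FiniteMeasure

theorem condExp_comp_ae_eq {T : X → X} (hT : MeasurePreserving T μ μ)
    (hTF : F.comap T = F) (hF : F ≤ m0) [SigmaFinite (μ.trim hF)] {g : X → ℝ}
    (hg : Integrable g μ) :
    μ[g|F] ∘ T =ᵐ[μ] μ[g ∘ T|F] := by
  have hT_meas : Measurable[F, F] T := measurable_iff_comap_le.2 hTF.le
  refine ae_eq_condExp_of_forall_setIntegral_eq hF (hT.integrable_comp_of_integrable hg)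
    (fun s _ _ => (hT.integrable_comp_of_integrable integrable_condExp).integrableOn)
    (fun s hs _ => ?_)
    (stronglyMeasurable_condExp.comp_measurable hT_meas).aestronglyMeasurable
  obtain ⟨t, ht, rfl⟩ : MeasurableSet[F.comap T] s := by rwa [hTF]
  have ht0 : MeasurableSet t := hF t ht
  simp only [Function.comp_apply]
  rw [← setIntegral_map ht0 (stronglyMeasurable_condExp.mono hF).aestronglyMeasurable
    hT.aemeasurable, ← setIntegral_map ht0 (hT.map_eq.symm ▸ hg.aestronglyMeasurable)
    hT.aemeasurable, hT.map_eq, setIntegral_condExp hF hg ht]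

section Action

variable {ι : Type*} [AddGroup ι] {U : ι → X → X}

theorem aestronglyMeasurable_invariantSets_inf_of_ae_invariant [Countable ι] (hU0 : U 0 = id)
    (hUadd : ∀ p q, U (p + q) = U p ∘ U q) (hF : F ≤ m0) (hUF : ∀ p, Measurable[F, F] (U p))
    {h : X → ℝ} (hh : Measurable[F] h) (hinv : ∀ p, h ∘ U p =ᵐ[μ] h) :
    AEStronglyMeasurable[invariantSets m0 U ⊓ F] h μ := by
  -- `h` is constant on the orbit of every point of `E`, which makes `E` invariant.
  set E := {x | ∀ p, h (U p x) = h x}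
  have hE_meas : MeasurableSet[F] E := by
    simp only [E, Set.ofPred_forall]
    exact .iInter fun p => measurableSet_eq_fun (hh.comp (hUF p)) hh
  have hU_apply : ∀ p q x, U (p + q) x = U p (U q x) := fun p q x => congrFun (hUadd p q) x
  have hE_inv : ∀ q x, U q x ∈ E ↔ x ∈ E := by
    refine fun q x => ⟨fun hx p => ?_, fun hx p => ?_⟩
    · have hx_eq : h x = h (U q x) := by
        rw [← hx (-q), ← hU_apply, neg_add_cancel, hU0, id]
      rw [← sub_add_cancel p q, hU_apply, hx (p - q), hx_eq]
    · rw [← hU_apply, hx, hx]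
  have h_comp : ∀ q, E.indicator h ∘ U q = E.indicator h := fun q => funext fun x => by
    by_cases hx : x ∈ E
    · simp [Set.indicator_of_mem hx, Set.indicator_of_mem ((hE_inv q x).2 hx), hx q]
    · simp [Set.indicator_of_notMem hx, Set.indicator_of_notMem (mt (hE_inv q x).1 hx)]
  have h_meas : Measurable[invariantSets m0 U ⊓ F] (E.indicator h) := fun t ht =>
    MeasurableSpace.measurableSet_inf.2
      ⟨⟨hF _ (hh.indicator hE_meas ht), fun q => by rw [← Set.preimage_comp, h_comp]⟩,
        hh.indicator hE_meas ht⟩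
  refine ⟨E.indicator h, h_meas.stronglyMeasurable, ?_⟩
  filter_upwards [ae_all_iff.2 hinv] with x hx
  exact (Set.indicator_of_mem (show x ∈ E from hx) h).symm

theorem aestronglyMeasurable_condExp_invariantSets_inf [Countable ι] [IsFiniteMeasure μ]
    (hU0 : U 0 = id) (hUadd : ∀ p q, U (p + q) = U p ∘ U q)
    (hUmp : ∀ p, MeasurePreserving (U p) μ μ) (hF : F ≤ m0) (hUF : ∀ p, Measurable[F, F] (U p))
    {g : X → ℝ} (hg : Integrable g μ) (hginv : ∀ p, g ∘ U p = g) :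
    AEStronglyMeasurable[invariantSets m0 U ⊓ F] (μ[g|F]) μ := by
  refine aestronglyMeasurable_invariantSets_inf_of_ae_invariant hU0 hUadd hF hUF
    stronglyMeasurable_condExp.measurable fun p => ?_
  have hcomap := MeasurableSpace.comap_eq_of_measurable_action hU0 hUadd hUF p
  simpa only [hginv p] using condExp_comp_ae_eq (hUmp p) hcomap hF hg

theorem condExp_indicator_ae_eq_of_invariantSets [Countable ι] [IsFiniteMeasure μ]
    (hU0 : U 0 = id) (hUadd : ∀ p q, U (p + q) = U p ∘ U q)
    (hUmp : ∀ p, MeasurePreserving (U p) μ μ) (hF : F ≤ m0) (hUF : ∀ p, Measurable[F, F] (U p))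
    (hKF : K ≤ F) (hJK : invariantSets m0 U ⊓ F ≤ K) {a : Set X}
    (ha : MeasurableSet[invariantSets m0 U] a) :
    μ[a.indicator (1 : X → ℝ)|F] =ᵐ[μ] μ[a.indicator (1 : X → ℝ)|K] := by
  have ha_inv : ∀ p, a.indicator (1 : X → ℝ) ∘ U p = a.indicator 1 := by
    refine fun p => funext fun x => ?_
    rw [Function.comp_apply, ← Set.indicator_comp_right, ha.2 p]
    rfl
  refine condExp_ae_eq_condExp_of_aestronglyMeasurable hF hKF ?_
  exact (aestronglyMeasurable_condExp_invariantSets_inf hU0 hUadd hUmp hF hUF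
    ((integrable_const 1).indicator ha.1) ha_inv).mono hJK

end Action

end MeasureTheory

/-- **Commutation of conditional expectations.**
Let `U` be a measure-preserving `ℤ²`-action on a probability space `(X, B, ν)`, `J` the
σ-algebra of `U`-invariant sets, `F` a `U`-invariant sub-σ-algebra of `B` and `C` a
sub-σ-algebra of `F`.  Then for all `f ∈ L²(B)`,
`E[E[f | J ∨ C] | F] = E[E[f | F] | J ∨ C] = E[f | F ∩ (J ∨ C)]` ν-a.s. -/
theorem condexp_commute_invariant_join
    {X : Type*} [m0 : MeasurableSpace X] (ν : Measure X) [IsProbabilityMeasure ν]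
    (U : ℤ × ℤ → X → X)
    (hU0 : U 0 = id)
    (hUadd : ∀ p q : ℤ × ℤ, U (p + q) = U p ∘ U q)
    (hUmp : ∀ p, MeasurePreserving (U p) ν ν)
    (F : MeasurableSpace X) (hF : F ≤ m0)
    (hFinv : ∀ (p : ℤ × ℤ) (s : Set X), MeasurableSet[F] s → MeasurableSet[F] (U p ⁻¹' s))
    (C : MeasurableSpace X) (hC : C ≤ F)
    (f : X → ℝ) (hf2 : MemLp f 2 ν) :
    ν[ν[f|invariantSets m0 U ⊔ C]|F] =ᵐ[ν] ν[ν[f|F]|invariantSets m0 U ⊔ C] ∧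
    ν[ν[f|F]|invariantSets m0 U ⊔ C] =ᵐ[ν] ν[f|F ⊓ (invariantSets m0 U ⊔ C)] := by
  -- `F` and `C` are local `MeasurableSpace X` instances here, so `m0` has to be passed by name.
  have hJ : invariantSets m0 U ≤ m0 := fun s hs => hs.1
  have hG : invariantSets m0 U ⊔ C ≤ m0 := sup_le hJ (hC.trans hF)
  have h_join : ∀ s, MeasurableSet[invariantSets m0 U ⊔ C] s →
      ν[s.indicator (1 : X → ℝ)|F] =ᵐ[ν] ν[s.indicator 1|F ⊓ (invariantSets m0 U ⊔ C)] :=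
    fun s => condExp_indicator_sup_ae_eq (m0 := m0) hJ hF hC fun a =>
      condExp_indicator_ae_eq_of_invariantSets (m0 := m0) hU0 hUadd hUmp hF hFinv inf_le_left
        (le_inf inf_le_right (inf_le_left.trans le_sup_left))
  have hf : Integrable f ν := hf2.integrable one_le_two
  have hFG := condExp_condExp_ae_eq_condExp_inf (m0 := m0) hF hG h_join hf
  have hGF := condExp_condExp_ae_eq_condExp_inf (m0 := m0) hG hF
    (fun B => condExp_indicator_ae_eq_condExp_inf_symm (m0 := m0) hF hG h_join) hf
  rw [inf_comm] at hGF
  exact ⟨hGF.trans hFG.symm, hFG⟩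
end

section
/- Let S be a measure-preserving invertible transformation of a probability space (X,B,ν), let F₀ be a sub-σ-algebra of B with S^{-1}F₀ ⊇ F₀, set F_n = S^{-n}F₀ (an increasing filtration), F_∞ = ∨_{n∈ℤ} F_n and F_{-∞} = ∩_{n∈ℤ} F_n, and let K denote the σ-algebra of S-invariant sets. Then K ∩ F_∞ = K ∩ F_{-∞} modulo ν-null sets. In particular, if K ⊆ F_∞ then K ⊆ F_{-∞}. -/
open MeasureTheory
open scoped symmDiff

/-!
An invariant set `s` is exactly as close to `F (n + 1) = S⁻¹ F n` as to `F n`, because `S⁻¹`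
preserves `ν` and fixes `s`. If `s ∈ F_∞`, it is approximated arbitrarily well inside some `F n`,
hence equally well inside every `F n`, and so (Borel–Cantelli) it lies in every `F n` modulo null
sets. The limsup of these representatives as `n → -∞` lies in `F_{-∞}`; since `F_{-∞}` is stable
under `S⁻¹`, the limsup of the preimages of that set under the iterates of `S` is still in
`F_{-∞}`, and it is exactly invariant.
-/

open MeasurableSpace Filter
open scoped ENNReal

namespace MeasureTheory

variable {X : Type*}

theorem isSetAlgebra_iUnion_measurableSet {ι : Type*} [Nonempty ι] {F : ι → MeasurableSpace X}
    (hF : Directed (· ≤ ·) F) : IsSetAlgebra (⋃ i, {u | MeasurableSet[F i] u}) := by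
  refine ⟨Set.mem_iUnion.2 ⟨Classical.arbitrary ι, (F _).measurableSet_empty⟩, ?_, ?_⟩
  · rintro u ⟨_, ⟨i, rfl⟩, hu⟩
    exact Set.mem_iUnion.2 ⟨i, hu.compl⟩
  · rintro u v ⟨_, ⟨i, rfl⟩, hu⟩ ⟨_, ⟨j, rfl⟩, hv⟩
    obtain ⟨k, hik, hjk⟩ := hF i j
    exact Set.mem_iUnion.2 ⟨k, (hik _ hu).union (hjk _ hv)⟩

variable [m0 : MeasurableSpace X] {ν : Measure X} {s : Set X}

theorem exists_measurableSet_ae_eq_of_forall_measure_symmDiff_lt {m : MeasurableSpace X}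
    (h : ∀ ε : ℝ≥0∞, 0 < ε → ∃ t, MeasurableSet[m] t ∧ ν (s ∆ t) < ε) :
    ∃ t, MeasurableSet[m] t ∧ t =ᵐ[ν] s := by
  choose t ht hlt using fun k : ℕ => h (2⁻¹ ^ k) (ENNReal.pow_pos (by simp) k)
  have hsum : ∑' k, ν (s ∆ t k) ≠ ∞ :=
    ne_top_of_le_ne_top (by simp [ENNReal.tsum_geometric])
      (ENNReal.tsum_le_tsum fun k => (hlt k).le)
  refine ⟨limsup t atTop, @MeasurableSet.measurableSet_limsup _ m _ ht, ?_⟩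
  -- Borel–Cantelli: a.e. point lies in only finitely many of the `s ∆ t k`.
  filter_upwards [ae_eventually_notMem hsum] with x hx
  have hx : ∀ᶠ k in atTop, x ∈ t k ↔ x ∈ s := hx.mono fun k hk => by
    simpa [Set.mem_symmDiff, iff_def, or_comm] using hk
  change (x ∈ limsup t atTop) = (x ∈ s)
  rw [mem_limsup_iff_frequently_mem, frequently_congr hx, frequently_const]

theorem exists_measurableSet_measure_symmDiff_lt_of_measurableSet_iSup [IsFiniteMeasure ν]
    {ι : Type*} [Nonempty ι] {F : ι → MeasurableSpace X} (hF : Directed (· ≤ ·) F)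
    (hFle : ∀ i, F i ≤ m0) (hs : MeasurableSet[⨆ i, F i] s) {ε : ℝ≥0∞} (hε : 0 < ε) :
    ∃ i t, MeasurableSet[F i] t ∧ ν (s ∆ t) < ε := by
  have hle : ⨆ i, F i ≤ m0 := iSup_le hFle
  obtain ⟨r, -, hr0, hrε⟩ := ENNReal.lt_iff_exists_real_btwn.1 hε
  have hdense : @Measure.MeasureDense X (⨆ i, F i) (ν.trim hle) (⋃ i, {u | MeasurableSet[F i] u}) :=
    Measure.MeasureDense.of_generateFrom_isSetAlgebra_finite (m := ⨆ i, F i) _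
      (isSetAlgebra_iUnion_measurableSet hF) (generateFrom_iUnion_measurableSet F).symm
  obtain ⟨t, ht𝒜, hst⟩ := hdense.approx (m := ⨆ i, F i) s hs (measure_ne_top _ _) r
    (ENNReal.ofReal_pos.1 hr0)
  obtain ⟨i, hti⟩ := Set.mem_iUnion.1 ht𝒜
  refine ⟨i, t, hti, ?_⟩
  rw [trim_measurableSet_eq hle (hs.symmDiff (le_iSup F i t hti))] at hst
  exact hst.trans hrε

theorem MeasurePreserving.measure_symmDiff_preimage_eq {S : X → X} (hS : MeasurePreserving S ν ν)
    (hs : MeasurableSet s) (hSs : S ⁻¹' s = s) {u : Set X} (hu : MeasurableSet u) :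
    ν (s ∆ (S ⁻¹' u)) = ν (s ∆ u) := by
  conv_lhs => rw [← hSs, ← Set.preimage_symmDiff]
  exact hS.measure_preimage (hs.symmDiff hu).nullMeasurableSet

theorem Measure.QuasiMeasurePreserving.exists_measurableSet_preimage_eq_of_preimage_ae
    {S : X → X} (hS : Measure.QuasiMeasurePreserving S ν ν) {m : MeasurableSpace X}
    (hSm : Measurable[m, m] S) {t : Set X} (ht : MeasurableSet[m] t) (hSt : S ⁻¹' t =ᵐ[ν] t) :
    ∃ u, MeasurableSet[m] u ∧ u =ᵐ[ν] t ∧ S ⁻¹' u = u := by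
  refine ⟨limsup (S^[·] ⁻¹' t) atTop,
    @MeasurableSet.measurableSet_limsup _ m _ fun n => hSm.iterate n ht,
    limsup_ae_eq_of_forall_ae_eq _ fun n => hS.preimage_iterate_ae_eq n hSt, ?_⟩
  simp only [Set.preimage_iterate_eq]
  exact CompleteLatticeHom.apply_limsup_iterate (CompleteLatticeHom.setPreimage S) t

theorem exists_measurableSet_iInf_ae_eq {F : ℤ → MeasurableSpace X} (hFmono : Monotone F)
    (h : ∀ n, ∃ t, MeasurableSet[F n] t ∧ t =ᵐ[ν] s) :
    ∃ t, MeasurableSet[⨅ n, F n] t ∧ t =ᵐ[ν] s := by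
  choose w hw hws using h
  refine ⟨limsup (fun k : ℕ => w (-k)) atTop, measurableSet_iInf.2 fun n => ?_,
    limsup_ae_eq_of_forall_ae_eq _ fun k => hws _⟩
  rw [← limsup_nat_add _ (-n).toNat]
  exact @MeasurableSet.measurableSet_limsup _ (F n) _ fun k => hFmono (by omega) _ (hw _)

section Filtration

variable {S : X → X} {F : ℤ → MeasurableSpace X}

theorem exists_measurableSet_measure_symmDiff_lt_of_preimage_eq (hS : MeasurePreserving S ν ν)
    (hFle : ∀ n, F n ≤ m0) (hFsucc : ∀ n, F (n + 1) = (F n).comap S) (hFmono : Monotone F)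
    (hs : MeasurableSet s) (hSs : S ⁻¹' s = s) {ε : ℝ≥0∞}
    (h : ∃ n t, MeasurableSet[F n] t ∧ ν (s ∆ t) < ε) (n : ℤ) :
    ∃ t, MeasurableSet[F n] t ∧ ν (s ∆ t) < ε := by
  obtain ⟨n₀, t₀, ht₀, hst₀⟩ := h
  rcases le_total n₀ n with hn | hn
  · exact ⟨t₀, hFmono hn _ ht₀, hst₀⟩
  induction n, hn using Int.leInductionDown with
  | base => exact ⟨t₀, ht₀, hst₀⟩
  | pred k _ ih =>
    obtain ⟨t, ht, hst⟩ := ih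
    rw [← sub_add_cancel k 1, hFsucc, measurableSet_comap] at ht
    obtain ⟨u, hu, rfl⟩ := ht
    exact ⟨u, hu, hS.measure_symmDiff_preimage_eq hs hSs (hFle _ _ hu) ▸ hst⟩

theorem exists_measurableSet_iInf_ae_eq_preimage_eq [IsFiniteMeasure ν]
    (hS : MeasurePreserving S ν ν) (hFle : ∀ n, F n ≤ m0)
    (hFsucc : ∀ n, F (n + 1) = (F n).comap S) (hFmono : Monotone F) (hSs : S ⁻¹' s = s)
    (hsF : MeasurableSet[⨆ n, F n] s) :
    ∃ t, MeasurableSet[⨅ n, F n] t ∧ t =ᵐ[ν] s ∧ S ⁻¹' t = t := by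
  have hs : MeasurableSet s := iSup_le hFle _ hsF
  have hlevel (n : ℤ) : ∃ t, MeasurableSet[F n] t ∧ t =ᵐ[ν] s :=
    exists_measurableSet_ae_eq_of_forall_measure_symmDiff_lt fun _ hε =>
      exists_measurableSet_measure_symmDiff_lt_of_preimage_eq hS hFle hFsucc hFmono hs hSs
        (exists_measurableSet_measure_symmDiff_lt_of_measurableSet_iSup hFmono.directed_le hFle
          hsF hε) n
  obtain ⟨t, ht, hts⟩ := exists_measurableSet_iInf_ae_eq hFmono hlevel
  have hSF : Measurable[⨅ n, F n, ⨅ n, F n] S := measurable_iff_comap_le.2 <| le_iInf fun n => by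
    rw [← sub_add_cancel n 1, hFsucc]
    exact comap_mono (iInf_le F (n - 1))
  have hSt : S ⁻¹' t =ᵐ[ν] t := by
    refine (hS.quasiMeasurePreserving.preimage_ae_eq hts).trans ?_
    rw [hSs]
    exact hts.symm
  obtain ⟨u, hu, hut, hSu⟩ :=
    hS.quasiMeasurePreserving.exists_measurableSet_preimage_eq_of_preimage_ae hSF ht hSt
  exact ⟨u, hu, hut.trans hts, hSu⟩

end Filtration

end MeasureTheory

theorem invariant_inter_tail_sigma_algebras_general
    {X : Type*} [m0 : MeasurableSpace X] (ν : Measure X) [IsProbabilityMeasure ν]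
    (S : X → X)
    (hS : MeasurePreserving S ν ν)
    (F : ℤ → MeasurableSpace X)
    (hFle : ∀ n, F n ≤ m0)
    (hFsucc : ∀ n, F (n + 1) = (F n).comap S)
    (hFmono : Monotone F) :
    ((∀ s : Set X, MeasurableSet[invariantSets m0 (fun _ : Unit => S) ⊓ ⨆ n, F n] s →
        ∃ t : Set X, MeasurableSet[invariantSets m0 (fun _ : Unit => S) ⊓ ⨅ n, F n] t ∧
          ν (s ∆ t) = 0) ∧
      (∀ s : Set X, MeasurableSet[invariantSets m0 (fun _ : Unit => S) ⊓ ⨅ n, F n] s →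
        ∃ t : Set X, MeasurableSet[invariantSets m0 (fun _ : Unit => S) ⊓ ⨆ n, F n] t ∧
          ν (s ∆ t) = 0)) ∧
    ((∀ s : Set X, MeasurableSet[invariantSets m0 (fun _ : Unit => S)] s →
        MeasurableSet[⨆ n, F n] s) →
      ∀ s : Set X, MeasurableSet[invariantSets m0 (fun _ : Unit => S)] s →
        ∃ t : Set X, MeasurableSet[⨅ n, F n] t ∧ ν (s ∆ t) = 0) := by
  have hsup_to_inf (s : Set X)
      (hs : MeasurableSet[invariantSets m0 (fun _ : Unit => S) ⊓ ⨆ n, F n] s) :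
      ∃ t, MeasurableSet[invariantSets m0 (fun _ : Unit => S) ⊓ ⨅ n, F n] t ∧ ν (s ∆ t) = 0 := by
    obtain ⟨hsK, hsF⟩ := measurableSet_inf.1 hs
    obtain ⟨t, htF, hts, hSt⟩ :=
      exists_measurableSet_iInf_ae_eq_preimage_eq hS hFle hFsucc hFmono (hsK.2 ()) hsF
    exact ⟨t, measurableSet_inf.2 ⟨⟨iInf_le_of_le 0 (hFle 0) _ htF, fun _ => hSt⟩, htF⟩,
      measure_symmDiff_eq_zero_iff.2 hts.symm⟩
  refine ⟨⟨hsup_to_inf, fun s hs => ⟨s, ?_, by simp⟩⟩, fun hKF s hs => ?_⟩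
  · obtain ⟨hsK, hsF⟩ := measurableSet_inf.1 hs
    exact measurableSet_inf.2 ⟨hsK, iInf_le_iSup (f := F) _ hsF⟩
  · obtain ⟨t, ht, hst⟩ := hsup_to_inf s (measurableSet_inf.2 ⟨hs, hKF s hs⟩)
    exact ⟨t, (measurableSet_inf.1 ht).2, hst⟩

/-- **Invariant sets and tail σ-algebras.**
Let `S` be an invertible measure-preserving transformation of a probability space
`(X, B, ν)`, let `F₀ ⊆ B` satisfy `S⁻¹F₀ ⊇ F₀`, and set `F n = S^{-n} F₀` (encoded by the
recurrence `F (n+1) = (F n).comap S` together with monotonicity).  Let `K` be the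
σ-algebra of `S`-invariant (measurable) sets.  Then `K ⊓ F_∞ = K ⊓ F_{-∞}` modulo
`ν`-null sets; in particular, if `K ≤ F_∞` then `K ≤ F_{-∞}` modulo `ν`-null sets. -/
theorem invariant_inter_tail_sigma_algebras
    {X : Type*} [m0 : MeasurableSpace X] (ν : Measure X) [IsProbabilityMeasure ν]
    (S S' : X → X) (hSS' : Function.LeftInverse S' S) (hS'S : Function.RightInverse S' S)
    (hS : MeasurePreserving S ν ν) (hS' : MeasurePreserving S' ν ν)
    (F : ℤ → MeasurableSpace X)
    (hFle : ∀ n, F n ≤ m0)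
    (hFsucc : ∀ n, F (n + 1) = (F n).comap S)
    (hFmono : Monotone F) :
    ((∀ s : Set X, MeasurableSet[invariantSets m0 (fun _ : Unit => S) ⊓ ⨆ n, F n] s →
        ∃ t : Set X, MeasurableSet[invariantSets m0 (fun _ : Unit => S) ⊓ ⨅ n, F n] t ∧
          ν (s ∆ t) = 0) ∧
      (∀ s : Set X, MeasurableSet[invariantSets m0 (fun _ : Unit => S) ⊓ ⨅ n, F n] s →
        ∃ t : Set X, MeasurableSet[invariantSets m0 (fun _ : Unit => S) ⊓ ⨆ n, F n] t ∧
          ν (s ∆ t) = 0)) ∧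
    ((∀ s : Set X, MeasurableSet[invariantSets m0 (fun _ : Unit => S)] s →
        MeasurableSet[⨆ n, F n] s) →
      ∀ s : Set X, MeasurableSet[invariantSets m0 (fun _ : Unit => S)] s →
        ∃ t : Set X, MeasurableSet[⨅ n, F n] t ∧ ν (s ∆ t) = 0) :=
  invariant_inter_tail_sigma_algebras_general (m0 := m0) ν S hS F hFle hFsucc hFmono
end

section
/- Let T be an ergodic measure-preserving ℤ²-action on (Ω,A,μ) with completely commuting invariant filtration (F_{i,j}), let I₁, I₂ be the σ-algebras of T_{1,0}-, respectively T_{0,1}-invariant sets and I = I₁ ∨ I₂, and let f be a square-integrable martingale difference adapted to (F_{i,j}). Write H = E[f|I] and H̄ = f − E[f|I], and suppose that the normalized partial sums (1/√(mn))Σ_{i=1}^m Σ_{j=1}^n f∘T_{i,j}, (1/√(mn))Σ Σ H∘T_{i,j} and (1/√(mn))Σ Σ H̄∘T_{i,j} converge in distribution, as min(m,n)→∞, to laws with characteristic functions φ₁(t)=E[exp(−t²η₁²/2)], φ₂(t)=E[exp(−t²η₂²/2)], φ₃(t)=E[exp(−t²η₃²/2)], where η_r² is the limit in distribution, as v→∞,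 of the conditional second moments E[((1/√v)Σ_{j=1}^v g∘T_{1,j})² | I₁] for g = f, H, H̄ respectively. If η₃² is almost surely constant, then φ₁(t) = φ₂(t)φ₃(t) for all t, i.e. the limit law for f is the convolution of the limit laws for E[f|I] and f−E[f|I]. -/
/-!
The cross terms vanish: the shifts of `H = E[f|I]` are `I`-measurable while those of
`H̄ = f - H` are centred given `I`, so the conditional second moments given `I₁ ⊆ I` of the
sums of `f` split exactly as `X_v = Y_v + Z_v`, the moments of the sums of `H` and `H̄`.
As `Z_v → c` in distribution, Slutsky's argument, run with the bounded Lipschitz test function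
`x ↦ exp (-t² x⁺ / 2)`, identifies the limit of `X_v` with that of `Y_v + c`, i.e.
`E exp(-t²η₁²/2) = E exp(-t²(η₂² + c)/2) = φ₂(t) exp(-t²c/2) = φ₂(t) φ₃(t)`.
-/

open MeasureTheory

/-- `f` is a martingale difference adapted to the `ℤ²`-indexed filtration `G`:
`f ∈ L²(μ)` is `G 0 0`-measurable and `E[f | G_{-1,∞}] = E[f | G_{∞,-1}] = 0`. -/
def IsMartingaleDifference2 {Ω : Type*} {mΩ : MeasurableSpace Ω} (μ : Measure Ω)
    (G : ℤ → ℤ → MeasurableSpace Ω) (f : Ω → ℝ) : Prop :=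
  MemLp f 2 μ ∧ AEStronglyMeasurable[G 0 0] f μ ∧
    μ[f|⨆ j : ℤ, G (-1) j] =ᵐ[μ] 0 ∧ μ[f|⨆ i : ℤ, G i (-1)] =ᵐ[μ] 0

open Filter Topology
open scoped NNReal BoundedContinuousFunction

lemma Real.abs_exp_neg_sub_exp_neg_le {u v : ℝ} (hu : 0 ≤ u) (hv : 0 ≤ v) :
    |exp (-u) - exp (-v)| ≤ |u - v| := by
  wlog h : v ≤ u generalizing u v
  · rw [abs_sub_comm, abs_sub_comm u]
    exact this hv hu (le_of_not_ge h)
  have hexp_le : exp (-u) ≤ exp (-v) := exp_le_exp.2 (by linarith)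
  have hexp_v : exp (-v) ≤ 1 := exp_le_one_iff.2 (by linarith)
  have htangent : exp (-v) * (1 - (u - v)) ≤ exp (-u) :=
    calc exp (-v) * (1 - (u - v)) ≤ exp (-v) * exp (-(u - v)) :=
          mul_le_mul_of_nonneg_left (one_sub_le_exp_neg _) (exp_pos _).le
      _ = exp (-u) := by rw [← exp_add]; ring_nf
  rw [abs_of_nonpos (by linarith), abs_of_nonneg (by linarith)]
  nlinarith [mul_nonneg (sub_nonneg.2 hexp_v) (sub_nonneg.2 h)]

namespace BoundedContinuousFunction

/-- Clamped at `0` so that it is bounded; on `[0, ∞)`, where the conditional variances live,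
it is `x ↦ exp (-a x)`. -/
noncomputable def expNegMulPosPart (a : ℝ≥0) : ℝ →ᵇ ℝ :=
  .ofNormedAddCommGroup (fun x => Real.exp (-(a * max x 0))) (by fun_prop) 1 fun x => by
    rw [Real.norm_of_nonneg (Real.exp_pos _).le, Real.exp_le_one_iff, neg_nonpos]
    positivity

lemma expNegMulPosPart_apply_of_nonneg (a : ℝ≥0) {x : ℝ} (hx : 0 ≤ x) :
    expNegMulPosPart a x = Real.exp (-(a * x)) := by
  simp [expNegMulPosPart, max_eq_left hx]

lemma expNegMulPosPart_add {a : ℝ≥0} {x y : ℝ} (hx : 0 ≤ x) (hy : 0 ≤ y) :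
    expNegMulPosPart a (x + y) = expNegMulPosPart a x * expNegMulPosPart a y := by
  rw [expNegMulPosPart_apply_of_nonneg a (add_nonneg hx hy),
    expNegMulPosPart_apply_of_nonneg a hx, expNegMulPosPart_apply_of_nonneg a hy, ← Real.exp_add]
  ring_nf

lemma lipschitzWith_expNegMulPosPart (a : ℝ≥0) : LipschitzWith a (expNegMulPosPart a) := by
  refine LipschitzWith.of_dist_le_mul fun x y => ?_
  simp only [expNegMulPosPart, coe_ofNormedAddCommGroup, Real.dist_eq]
  calc |Real.exp (-(a * max x 0)) - Real.exp (-(a * max y 0))|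
      ≤ |a * max x 0 - a * max y 0| :=
        Real.abs_exp_neg_sub_exp_neg_le (by positivity) (by positivity)
    _ = a * |max x 0 - max y 0| := by rw [← mul_sub, abs_mul, NNReal.abs_eq]
    _ ≤ a * |x - y| := mul_le_mul_of_nonneg_left (abs_max_sub_max_le_abs _ _ _) a.2

end BoundedContinuousFunction

namespace MeasureTheory

/-- Slutsky's theorem, tested against a single bounded Lipschitz function. -/
theorem integral_comp_eq_integral_comp_add_of_tendsto {ι Ω Ω' : Type*} {l : Filter ι} [l.NeBot]
    [MeasurableSpace Ω] [MeasurableSpace Ω'] {μ : Measure Ω} [IsFiniteMeasure μ]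
    {ν : Measure Ω'} {X Y Z : ι → Ω → ℝ} {η₁ η₂ : Ω' → ℝ} {c : ℝ}
    (hY : ∀ i, AEStronglyMeasurable (Y i) μ) (hZ : ∀ i, AEStronglyMeasurable (Z i) μ)
    (hXYZ : ∀ i, X i =ᵐ[μ] Y i + Z i)
    (hXη : ∀ g : ℝ →ᵇ ℝ, Tendsto (fun i => ∫ ω, g (X i ω) ∂μ) l (𝓝 (∫ ω, g (η₁ ω) ∂ν)))
    (hYη : ∀ g : ℝ →ᵇ ℝ, Tendsto (fun i => ∫ ω, g (Y i ω) ∂μ) l (𝓝 (∫ ω, g (η₂ ω) ∂ν)))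
    (hZc : ∀ g : ℝ →ᵇ ℝ, Tendsto (fun i => ∫ ω, g (Z i ω) ∂μ) l (𝓝 (g c)))
    {g : ℝ →ᵇ ℝ} {L : ℝ≥0} (hg : LipschitzWith L g) :
    ∫ ω, g (η₁ ω) ∂ν = ∫ ω, g (η₂ ω + c) ∂ν := by
  let gc : ℝ →ᵇ ℝ := g.compContinuous ⟨(· + c), by fun_prop⟩
  let h : ℝ →ᵇ ℝ := .ofNormedAddCommGroup (fun z => min (L * |z - c|) (2 * ‖g‖)) (by fun_prop)
    (2 * ‖g‖) fun z => by
      rw [Real.norm_of_nonneg (le_min (by positivity) (by positivity))]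
      exact min_le_right _ _
  have hgap : ∀ y z, ‖g (y + z) - gc y‖ ≤ h z := fun y z => by
    refine le_min ?_ (g.dist_le_two_norm _ _)
    calc dist (g (y + z)) (g (y + c)) ≤ L * dist (y + z) (y + c) := hg.dist_le_mul _ _
      _ = L * |z - c| := by rw [Real.dist_eq, add_sub_add_left_eq_sub]
  have hint : ∀ (k : ℝ →ᵇ ℝ) {W : Ω → ℝ}, AEStronglyMeasurable W μ →
      Integrable (fun ω => k (W ω)) μ := fun k W hW =>
    (k.integrable _).comp_aemeasurable hW.aemeasurable
  have hdiff : Tendsto (fun i => ∫ ω, g (X i ω) ∂μ - ∫ ω, gc (Y i ω) ∂μ) l (𝓝 0) := by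
    have hc : h c = 0 := by simp [h]
    refine squeeze_zero_norm (fun i => ?_) (hc ▸ hZc h)
    have hXg : (fun ω => g (X i ω)) =ᵐ[μ] fun ω => g ((Y i + Z i) ω) := (hXYZ i).fun_comp g
    rw [integral_congr_ae hXg,
      ← integral_sub (hint g ((hY i).add (hZ i))) (hint gc (hY i))]
    exact (norm_integral_le_integral_norm _).trans
      (integral_mono ((hint g ((hY i).add (hZ i))).sub (hint gc (hY i))).norm (hint h (hZ i))
        fun ω => hgap _ _)
  have hXgc := hdiff.add (hYη gc)
  simp only [sub_add_cancel, zero_add] at hXgc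
  exact tendsto_nhds_unique (hXη g) hXgc

lemma MeasurePreserving.setIntegral_preimage {α β E : Type*} [MeasurableSpace α]
    [MeasurableSpace β] [NormedAddCommGroup E] [NormedSpace ℝ E] {μ : Measure α} {ν : Measure β}
    {S : α → β} (hS : MeasurePreserving S μ ν) {g : β → E} (hg : AEStronglyMeasurable g ν)
    {s : Set β} (hs : MeasurableSet s) :
    ∫ x in S ⁻¹' s, g (S x) ∂μ = ∫ x in s, g x ∂ν := by
  rw [← setIntegral_map hs (hS.map_eq ▸ hg) hS.measurable.aemeasurable, hS.map_eq]

variable {Ω : Type*} {m₁ m m₀ : MeasurableSpace Ω} {μ : Measure Ω} [IsFiniteMeasure μ]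

lemma MeasurePreserving.condExp_comp {S : Ω → Ω} (hS : MeasurePreserving S μ μ)
    (hm : m ≤ m₀) (hSm : m.comap S = m) {g : Ω → ℝ} (hg : Integrable g μ) :
    μ[g ∘ S|m] =ᵐ[μ] μ[g|m] ∘ S := by
  have hSmeas : Measurable[m, m] S := fun s hs => hSm ▸ ⟨s, hs, rfl⟩
  refine (ae_eq_condExp_of_forall_setIntegral_eq hm (hS.integrable_comp_of_integrable hg)
    (fun s _ _ => (hS.integrable_comp_of_integrable integrable_condExp).integrableOn)
    (fun s hs _ => ?_)
    (stronglyMeasurable_condExp.comp_measurable hSmeas).aestronglyMeasurable).symm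
  obtain ⟨s', hs', rfl⟩ : ∃ s', MeasurableSet[m] s' ∧ S ⁻¹' s' = s := by
    rw [← hSm] at hs
    exact hs
  simp only [Function.comp_apply]
  rw [hS.setIntegral_preimage integrable_condExp.1 (hm s' hs'),
    hS.setIntegral_preimage hg.1 (hm s' hs'), setIntegral_condExp hm hg hs']

lemma condExp_sum_comp_ae_eq_zero {ι : Type*} {S : ι → Ω → Ω}
    (hS : ∀ j, MeasurePreserving (S j) μ μ) (hm : m ≤ m₀) (hSm : ∀ j, m.comap (S j) = m)
    {g : Ω → ℝ} (hg : Integrable g μ) (hg0 : μ[g|m] =ᵐ[μ] 0) (s : Finset ι) :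
    μ[fun x => ∑ j ∈ s, g (S j x)|m] =ᵐ[μ] 0 := by
  have hsum : (fun x => ∑ j ∈ s, g (S j x)) = ∑ j ∈ s, g ∘ S j := by
    ext x
    simp [Finset.sum_apply]
  rw [hsum]
  refine (condExp_finsetSum (fun j _ => (hS j).integrable_comp_of_integrable hg) m).trans ?_
  refine (eventuallyEq_sum fun j _ => ((hS j).condExp_comp hm (hSm j) hg).trans
    ((hS j).quasiMeasurePreserving.ae_eq_comp hg0)).trans ?_
  simp

lemma condExp_sub_condExp_ae_eq_zero (hm : m ≤ m₀) {f : Ω → ℝ} (hf : Integrable f μ) :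
    μ[f - μ[f|m]|m] =ᵐ[μ] 0 := by
  filter_upwards [condExp_sub hf (integrable_condExp (m := m) (f := f)) m,
    condExp_condExp_of_le (f := f) (μ := μ) (le_refl m) hm] with x hsub hcond
  simp [hsub, hcond]

lemma condExp_mul_ae_eq_zero (hm₁ : m₁ ≤ m) (hm : m ≤ m₀) {Y Z : Ω → ℝ}
    (hY : StronglyMeasurable[m] Y) (hY2 : MemLp Y 2 μ) (hZ2 : MemLp Z 2 μ)
    (hZ : μ[Z|m] =ᵐ[μ] 0) : μ[Y * Z|m₁] =ᵐ[μ] 0 :=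
  calc μ[Y * Z|m₁] =ᵐ[μ] μ[μ[Y * Z|m]|m₁] := (condExp_condExp_of_le hm₁ hm).symm
    _ =ᵐ[μ] μ[0|m₁] := condExp_congr_ae <| by
      filter_upwards [condExp_mul_of_stronglyMeasurable_left hY (hY2.integrable_mul hZ2)
        (hZ2.integrable one_le_two), hZ] with x hYZ hZx
      simp [hYZ, hZx]
    _ = 0 := condExp_zero

lemma condExp_add_sq_ae_eq (hm₁ : m₁ ≤ m) (hm : m ≤ m₀) {Y Z : Ω → ℝ}
    (hY : StronglyMeasurable[m] Y) (hY2 : MemLp Y 2 μ) (hZ2 : MemLp Z 2 μ)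
    (hZ : μ[Z|m] =ᵐ[μ] 0) : μ[(Y + Z) ^ 2|m₁] =ᵐ[μ] μ[Y ^ 2|m₁] + μ[Z ^ 2|m₁] := by
  have hexpand : (Y + Z) ^ 2 = Y ^ 2 + (Z ^ 2 + (2 : ℝ) • (Y * Z)) := by
    ext x
    simp only [Pi.add_apply, Pi.pow_apply, Pi.smul_apply, Pi.mul_apply, smul_eq_mul]
    ring
  have hcross := (hY2.integrable_mul hZ2).smul (2 : ℝ)
  rw [hexpand]
  filter_upwards [condExp_add (f := Y ^ 2) (g := Z ^ 2 + (2 : ℝ) • (Y * Z))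
      hY2.integrable_sq (hZ2.integrable_sq.add hcross) m₁,
    condExp_add (f := Z ^ 2) hZ2.integrable_sq hcross m₁, condExp_smul (2 : ℝ) (Y * Z) m₁,
    condExp_mul_ae_eq_zero hm₁ hm hY hY2 hZ2 hZ] with x h₁ h₂ h₃ h₄
  rw [h₁, Pi.add_apply, h₂, Pi.add_apply, h₃, Pi.smul_apply, h₄]
  simp

lemma condExp_const_mul_sq_sum_comp_ae_eq (hm₁ : m₁ ≤ m) (hm : m ≤ m₀) {ι : Type*}
    {S : ι → Ω → Ω} (hS : ∀ j, MeasurePreserving (S j) μ μ) (hSm : ∀ j, m.comap (S j) = m)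
    {f : Ω → ℝ} (hf : MemLp f 2 μ) (s : Finset ι) (a : ℝ) :
    μ[fun x => a * (∑ j ∈ s, f (S j x)) ^ 2|m₁] =ᵐ[μ]
      μ[fun x => a * (∑ j ∈ s, μ[f|m] (S j x)) ^ 2|m₁] +
        μ[fun x => a * (∑ j ∈ s, (f - μ[f|m]) (S j x)) ^ 2|m₁] := by
  set Y : Ω → ℝ := fun x => ∑ j ∈ s, μ[f|m] (S j x)
  set Z : Ω → ℝ := fun x => ∑ j ∈ s, (f - μ[f|m]) (S j x)
  have hf' : MemLp (f - μ[f|m]) 2 μ := hf.sub (hf.condExp one_le_two)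
  have hY : StronglyMeasurable[m] Y :=
    Finset.stronglyMeasurable_fun_sum _ fun j _ =>
      stronglyMeasurable_condExp.comp_measurable fun t ht => hSm j ▸ ⟨t, ht, rfl⟩
  have hY2 : MemLp Y 2 μ :=
    memLp_finsetSum _ fun j _ => (hf.condExp one_le_two).comp_measurePreserving (hS j)
  have hZ2 : MemLp Z 2 μ := memLp_finsetSum _ fun j _ => hf'.comp_measurePreserving (hS j)
  have hZ : μ[Z|m] =ᵐ[μ] 0 := condExp_sum_comp_ae_eq_zero hS hm hSm
    (hf'.integrable one_le_two) (condExp_sub_condExp_ae_eq_zero hm (hf.integrable one_le_two)) s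
  have hfYZ : (fun x => a * (∑ j ∈ s, f (S j x)) ^ 2) = a • (Y + Z) ^ 2 := by
    ext x
    simp [Y, Z]
  rw [hfYZ]
  show μ[a • (Y + Z) ^ 2|m₁] =ᵐ[μ] μ[a • Y ^ 2|m₁] + μ[a • Z ^ 2|m₁]
  filter_upwards [condExp_smul a ((Y + Z) ^ 2) m₁, condExp_smul a (Y ^ 2) m₁,
    condExp_smul a (Z ^ 2) m₁, condExp_add_sq_ae_eq hm₁ hm hY hY2 hZ2 hZ] with x h₁ h₂ h₃ h₄
  rw [Pi.add_apply, h₁, h₂, h₃, Pi.smul_apply, h₄]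
  simp [mul_add]

end MeasureTheory

lemma invariantSets_le {X ι : Type*} (m : MeasurableSpace X) (U : ι → X → X) :
    invariantSets m U ≤ m := fun _ hs => hs.1

lemma invariantSets_comap_le {X ι : Type*} {m : MeasurableSpace X} {U : ι → X → X}
    {V : X → X} (hV : Measurable[m, m] V) (hUV : ∀ i, Function.Commute (U i) V) :
    (invariantSets m U).comap V ≤ invariantSets m U := by
  rintro _ ⟨s, ⟨hs, hinv⟩, rfl⟩
  refine ⟨hV hs, fun i => ?_⟩
  rw [← Set.preimage_comp, ← (hUV i).comp_eq, Set.preimage_comp, hinv i]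

lemma MeasurableSpace.comap_eq_self_of_forall_comap_le {G Ω : Type*} [AddGroup G]
    {T : G → Ω → Ω} (hT0 : T 0 = id) (hTadd : ∀ p q, T (p + q) = T p ∘ T q)
    {m : MeasurableSpace Ω} (h : ∀ q, m.comap (T q) ≤ m) (q : G) : m.comap (T q) = m := by
  refine le_antisymm (h q) ?_
  calc m = (m.comap (T (-q))).comap (T q) := by
        rw [comap_comp, ← hTadd, neg_add_cancel, hT0, comap_id]
    _ ≤ m.comap (T q) := comap_mono (h (-q))

lemma comap_invariantSets_sup_eq {G Ω : Type*} [AddCommGroup G] [m₀ : MeasurableSpace Ω]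
    {T : G → Ω → Ω} (hT0 : T 0 = id) (hTadd : ∀ p q, T (p + q) = T p ∘ T q)
    (hT : ∀ p, Measurable (T p)) (p₁ p₂ q : G) :
    (invariantSets m₀ (fun _ : Unit => T p₁) ⊔ invariantSets m₀ (fun _ : Unit => T p₂)).comap
        (T q) =
      invariantSets m₀ (fun _ : Unit => T p₁) ⊔ invariantSets m₀ (fun _ : Unit => T p₂) := by
  have hcomm : ∀ p q, Function.Commute (T p) (T q) := fun p q x => by
    rw [← Function.comp_apply (f := T p), ← hTadd, add_comm, hTadd, Function.comp_apply]
  refine MeasurableSpace.comap_eq_self_of_forall_comap_le hT0 hTadd (fun q => ?_) q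
  rw [MeasurableSpace.comap_sup]
  exact sup_le_sup (invariantSets_comap_le (hT q) fun _ => hcomm _ _)
    (invariantSets_comap_le (hT q) fun _ => hcomm _ _)

theorem limit_law_convolution_general
    {Ω : Type*} [m0 : MeasurableSpace Ω] (μ : Measure Ω) [IsProbabilityMeasure μ]
    (T : ℤ × ℤ → Ω → Ω)
    (hT0 : T 0 = id)
    (hTadd : ∀ p q : ℤ × ℤ, T (p + q) = T p ∘ T q)
    (hTmp : ∀ p, MeasurePreserving (T p) μ μ)
    (F : ℤ → ℤ → MeasurableSpace Ω)
    (f H Hbar : Ω → ℝ)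
    (hmd : IsMartingaleDifference2 μ F f)
    (hH : H = μ[f|invariantSets m0 (fun _ : Unit => T (1, 0)) ⊔
      invariantSets m0 (fun _ : Unit => T (0, 1))])
    (hHbar : Hbar = f - H)
    {Ω' : Type*} [mΩ' : MeasurableSpace Ω'] (ν' : Measure Ω') [IsProbabilityMeasure ν']
    (ηsq : Fin 3 → Ω' → ℝ)
    (hηnonneg : ∀ r, 0 ≤ᵐ[ν'] ηsq r)
    (hηlim : ∀ r : Fin 3,
      ∀ g : BoundedContinuousFunction ℝ ℝ,
        Filter.Tendsto (fun v : ℕ => ∫ ω,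
            g ((μ[(fun x => (v : ℝ)⁻¹ *
              (∑ j ∈ Finset.Icc 1 v, (![f, H, Hbar] r) (T (1, (j : ℤ)) x)) ^ 2)|
                invariantSets m0 (fun _ : Unit => T (1, 0))]) ω) ∂μ)
          Filter.atTop (nhds (∫ ω', g (ηsq r ω') ∂ν')))
    (hconst : ∃ c : ℝ, ηsq 2 =ᵐ[ν'] fun _ => c) :
    ∀ t : ℝ,
      ∫ ω', Real.exp (-(t ^ 2) * ηsq 0 ω' / 2) ∂ν' =
        (∫ ω', Real.exp (-(t ^ 2) * ηsq 1 ω' / 2) ∂ν') *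
          (∫ ω', Real.exp (-(t ^ 2) * ηsq 2 ω' / 2) ∂ν') := by
  intro t
  obtain ⟨c, hc⟩ := hconst
  subst hHbar hH
  have hdecomp := fun v : ℕ => condExp_const_mul_sq_sum_comp_ae_eq le_sup_left
    (sup_le (invariantSets_le _ _) (invariantSets_le _ _)) (fun j : ℕ => hTmp (1, j))
    (fun _ => comap_invariantSets_sup_eq hT0 hTadd (fun p => (hTmp p).measurable) (1, 0) (0, 1) _)
    hmd.1 (Finset.Icc 1 v) (v : ℝ)⁻¹
  have hη₃ : ∀ g : ℝ →ᵇ ℝ, ∫ ω', g (ηsq 2 ω') ∂ν' = g c := fun g =>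
    (integral_congr_ae (hc.fun_comp g)).trans (by simp)
  obtain ⟨_, hc0⟩ := ((hηnonneg 2).trans hc.le).exists
  set E := BoundedContinuousFunction.expNegMulPosPart (t ^ 2 / 2).toNNReal
  have hcondExp_meas (g : Ω → ℝ) :
      AEStronglyMeasurable (μ[g|invariantSets m0 (fun _ : Unit => T (1, 0))]) μ :=
    (stronglyMeasurable_condExp.mono (invariantSets_le _ _)).aestronglyMeasurable
  have hslutsky : ∫ ω', E (ηsq 0 ω') ∂ν' = ∫ ω', E (ηsq 1 ω' + c) ∂ν' :=
    integral_comp_eq_integral_comp_add_of_tendsto (fun _ => hcondExp_meas _)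
      (fun _ => hcondExp_meas _) hdecomp (hηlim 0) (hηlim 1)
      (fun g => hη₃ g ▸ hηlim 2 g) (BoundedContinuousFunction.lipschitzWith_expNegMulPosPart _)
  have hchar (r : Fin 3) :
      ∫ ω', Real.exp (-(t ^ 2) * ηsq r ω' / 2) ∂ν' = ∫ ω', E (ηsq r ω') ∂ν' :=
    integral_congr_ae <| (hηnonneg r).mono fun _ h => by
      simp only [E, BoundedContinuousFunction.expNegMulPosPart_apply_of_nonneg _ h,
        Real.coe_toNNReal _ (by positivity : 0 ≤ t ^ 2 / 2)]
      ring_nf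
  rw [hchar, hchar, hchar, hslutsky, hη₃, ← integral_mul_const]
  exact integral_congr_ae <| (hηnonneg 1).mono fun _ h =>
    BoundedContinuousFunction.expNegMulPosPart_add h hc0

/-- **The limit law for `f` is the convolution of the limit laws of `E[f|I]` and
`f − E[f|I]`.**
Let `f` be a square-integrable martingale difference for an ergodic `ℤ²`-action with
completely commuting invariant filtration, `I = I₁ ∨ I₂`, `H = E[f|I]`, `H̄ = f − H`.
Suppose the normalized partial sums of `f`, `H`, `H̄` converge in distribution to the
mixed normal laws with characteristic functions `φ_r(t) = E[exp(−t²η_r²/2)]` (`r=1,2,3`),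
i.e. to the laws of `√(η_r²)·N` with `N` a standard normal independent of `η_r²`, where
`η_r²` is the limit in distribution of the conditional second moments
`E[((1/√v) Σ_{j≤v} g∘T_{1,j})² | I₁]` for `g = f, H, H̄` respectively.  If `η₃²` is a.s.
constant, then `φ₁(t) = φ₂(t) φ₃(t)` for all `t`. -/
theorem limit_law_convolution
    {Ω : Type*} [m0 : MeasurableSpace Ω] (μ : Measure Ω) [IsProbabilityMeasure μ]
    (T : ℤ × ℤ → Ω → Ω)
    (hT0 : T 0 = id)
    (hTadd : ∀ p q : ℤ × ℤ, T (p + q) = T p ∘ T q)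
    (hTmp : ∀ p, MeasurePreserving (T p) μ μ)
    (hTerg : ∀ s : Set Ω, MeasurableSet s → (∀ p, T p ⁻¹' s = s) → μ s = 0 ∨ μ s = 1)
    (F : ℤ → ℤ → MeasurableSpace Ω)
    (hFle : ∀ i j, F i j ≤ m0)
    (hFinv : ∀ i j : ℤ, F i j = (F 0 0).comap (T (i, j)))
    (hFcc : ∀ f : Ω → ℝ, Integrable f μ → ∀ i j i' j' : ℤ,
      μ[μ[f|F i j]|F i' j'] =ᵐ[μ] μ[f|F (min i i') (min j j')])
    (f H Hbar : Ω → ℝ)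
    (hmd : IsMartingaleDifference2 μ F f)
    (hH : H = μ[f|invariantSets m0 (fun _ : Unit => T (1, 0)) ⊔
      invariantSets m0 (fun _ : Unit => T (0, 1))])
    (hHbar : Hbar = f - H)
    {Ω' : Type*} [mΩ' : MeasurableSpace Ω'] (ν' : Measure Ω') [IsProbabilityMeasure ν']
    (ηsq : Fin 3 → Ω' → ℝ)
    (hηmeas : ∀ r, Measurable (ηsq r))
    (hηnonneg : ∀ r, 0 ≤ᵐ[ν'] ηsq r)
    (hηlim : ∀ r : Fin 3,
      ∀ g : BoundedContinuousFunction ℝ ℝ,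
        Filter.Tendsto (fun v : ℕ => ∫ ω,
            g ((μ[(fun x => (v : ℝ)⁻¹ *
              (∑ j ∈ Finset.Icc 1 v, (![f, H, Hbar] r) (T (1, (j : ℤ)) x)) ^ 2)|
                invariantSets m0 (fun _ : Unit => T (1, 0))]) ω) ∂μ)
          Filter.atTop (nhds (∫ ω', g (ηsq r ω') ∂ν')))
    (hsumslim : ∀ r : Fin 3,
      ∀ g : BoundedContinuousFunction ℝ ℝ,
        Filter.Tendsto (fun p : ℕ × ℕ => ∫ ω,
            g ((Real.sqrt ((p.1 * p.2 : ℕ) : ℝ))⁻¹ *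
              ∑ i ∈ Finset.Icc 1 p.1, ∑ j ∈ Finset.Icc 1 p.2,
                (![f, H, Hbar] r) (T ((i : ℤ), (j : ℤ)) ω)) ∂μ)
          Filter.atTop
          (nhds (∫ q : Ω' × ℝ, g (Real.sqrt (ηsq r q.1) * q.2)
            ∂(ν'.prod (ProbabilityTheory.gaussianReal 0 1)))))
    (hconst : ∃ c : ℝ, ηsq 2 =ᵐ[ν'] fun _ => c) :
    ∀ t : ℝ,
      ∫ ω', Real.exp (-(t ^ 2) * ηsq 0 ω' / 2) ∂ν' =
        (∫ ω', Real.exp (-(t ^ 2) * ηsq 1 ω' / 2) ∂ν') *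
          (∫ ω', Real.exp (-(t ^ 2) * ηsq 2 ω' / 2) ∂ν') :=
  limit_law_convolution_general (m0 := m0) μ T hT0 hTadd hTmp F f H Hbar hmd hH hHbar (mΩ' := mΩ')
    ν' ηsq hηnonneg hηlim hconst
end
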